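/- arXiv:2006.06992 — 8 statements merged into one kernel-verified Lean document; each statement's English description precedes it below -/
import Mathlib

section
/- Fix real numbers t0 < t1 and 0 ≤ x_min < x_max, and a continuous G : [t0,t1] → ℝ with G(t) > 0 for all t. Suppose ψ1 and ψ2 are both C¹ functions from [t0,t1] × [x_min,x_max] to ℝ satisfying ∂_t ψ_i(t,x) + G(t) ∂_x ψ_i(t,x) = 0 for all (t,x), with the same initial datum ψ1(t0,·) = ψ2(t0,·) on [x_min,x_max] and the same boundary datum ψ1(·, x_min) = ψ2(·, x_min) on [t0,t1]. Then ψ1 = ψ2 on [t0,t1] × [x_min,x_max]. -/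
/-!
A classical solution is constant along every characteristic curve `u ↦ (u, γ u)` with
`γ' = G`, since its derivative along the curve is `∂ₜψ + G ∂ₓψ = 0`. As `G > 0`, the
characteristic through `(T, X)`, followed backwards in time, stays in the rectangle until it
leaves it through the inflow boundary `{t0} × [xmin, xmax] ∪ [t0, t1] × {xmin}`, where the two
solutions agree.
-/

open Set Function

theorem hasDerivWithinAt_comp_curve {f : ℝ → ℝ → ℝ} {s t S : Set ℝ} {γ : ℝ → ℝ} {τ v : ℝ}
    (hs : UniqueDiffWithinAt ℝ s τ) (ht : UniqueDiffWithinAt ℝ t (γ τ))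
    (hf : DifferentiableWithinAt ℝ (uncurry f) (s ×ˢ t) (τ, γ τ))
    (hS : MapsTo (fun u => (u, γ u)) S (s ×ˢ t)) (hτ : τ ∈ S)
    (hγ : HasDerivWithinAt γ v S τ) :
    HasDerivWithinAt (fun u => f u (γ u))
      (derivWithin (fun σ => f σ (γ τ)) s τ + v * derivWithin (f τ) t (γ τ)) S τ := by
  obtain ⟨hτs, hγt⟩ := hS hτ
  have hF := hf.hasFDerivWithinAt
  have h₁ : derivWithin (fun σ => f σ (γ τ)) s τ = fderivWithin ℝ (uncurry f) (s ×ˢ t)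
      (τ, γ τ) (1, 0) :=
    (hF.comp_hasDerivWithinAt (f := fun σ => (σ, γ τ)) τ
      ((hasDerivWithinAt_id τ s).prodMk (hasDerivWithinAt_const τ s (γ τ)))
      fun σ hσ => ⟨hσ, hγt⟩).derivWithin hs
  have h₂ : derivWithin (f τ) t (γ τ) = fderivWithin ℝ (uncurry f) (s ×ˢ t) (τ, γ τ) (0, 1) :=
    (hF.comp_hasDerivWithinAt (f := fun ξ => (τ, ξ)) (γ τ)
      ((hasDerivWithinAt_const (γ τ) t τ).prodMk (hasDerivWithinAt_id (γ τ) t))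
      fun ξ hξ => ⟨hτs, hξ⟩).derivWithin ht
  have hcurve := hF.comp_hasDerivWithinAt τ ((hasDerivWithinAt_id τ S).prodMk hγ) hS
  have hsplit : ((1 : ℝ), v) = (1, 0) + v • (0, 1) := by simp
  rw [hsplit, map_add, map_smul, smul_eq_mul, ← h₁, ← h₂] at hcurve
  exact hcurve

section Transport

variable {s t : Set ℝ} {G : ℝ → ℝ} {ψ : ℝ → ℝ → ℝ}

theorem hasDerivWithinAt_zero_of_transport (hs : UniqueDiffOn ℝ s) (ht : UniqueDiffOn ℝ t)
    (hψ : DifferentiableOn ℝ (uncurry ψ) (s ×ˢ t))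
    (hPDE : ∀ τ ∈ s, ∀ x ∈ t,
      derivWithin (fun σ => ψ σ x) s τ + G τ * derivWithin (fun ξ => ψ τ ξ) t x = 0)
    {S : Set ℝ} {γ : ℝ → ℝ} (hS : MapsTo (fun u => (u, γ u)) S (s ×ˢ t)) {τ : ℝ}
    (hτ : τ ∈ S) (hγ : HasDerivWithinAt γ (G τ) S τ) :
    HasDerivWithinAt (fun u => ψ u (γ u)) 0 S τ := by
  obtain ⟨hτs, hγt⟩ := hS hτ
  simpa only [hPDE τ hτs (γ τ) hγt] using
    hasDerivWithinAt_comp_curve (hs τ hτs) (ht _ hγt) (hψ _ (hS hτ)) hS hτ hγ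

theorem apply_eq_of_transport (hs : UniqueDiffOn ℝ s) (ht : UniqueDiffOn ℝ t)
    (hψ : DifferentiableOn ℝ (uncurry ψ) (s ×ˢ t))
    (hPDE : ∀ τ ∈ s, ∀ x ∈ t,
      derivWithin (fun σ => ψ σ x) s τ + G τ * derivWithin (fun ξ => ψ τ ξ) t x = 0)
    {a b : ℝ} (hab : a ≤ b) {γ : ℝ → ℝ} (hS : MapsTo (fun u => (u, γ u)) (Icc a b) (s ×ˢ t))
    (hγ : ∀ u ∈ Icc a b, HasDerivWithinAt γ (G u) (Icc a b) u) :
    ψ a (γ a) = ψ b (γ b) := by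
  have hconst := (convex_Icc a b).norm_image_sub_le_of_norm_hasDerivWithin_le (C := 0)
    (fun u hu => hasDerivWithinAt_zero_of_transport hs ht hψ hPDE hS hu (hγ u hu))
    (fun _ _ => norm_zero.le) (left_mem_Icc.2 hab) (right_mem_Icc.2 hab)
  rw [zero_mul, norm_le_zero_iff, sub_eq_zero] at hconst
  exact hconst.symm

end Transport

theorem exists_hasDerivAt_eq {g : ℝ → ℝ} (hg : Continuous g) (T X : ℝ) :
    ∃ γ : ℝ → ℝ, γ T = X ∧ ∀ u, HasDerivAt γ (g u) u :=
  ⟨fun u => X + ∫ v in T..u, g v, by simp,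
    fun u => ((hg.integral_hasStrictDerivAt T u).hasDerivAt).const_add X⟩

theorem exists_entry_time {γ : ℝ → ℝ} (hcont : Continuous γ) {a T xmin : ℝ}
    (haT : a ≤ T) (hT : xmin ≤ γ T) :
    ∃ s₀ ∈ Icc a T, xmin ≤ γ s₀ ∧ (s₀ = a ∨ γ s₀ = xmin) := by
  by_cases ha : xmin ≤ γ a
  · exact ⟨a, left_mem_Icc.2 haT, ha, Or.inl rfl⟩
  · obtain ⟨s₀, hs₀, hγs₀⟩ :=
      intermediate_value_Icc haT hcont.continuousOn ⟨(not_le.1 ha).le, hT⟩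
    exact ⟨s₀, hs₀, hγs₀.ge, Or.inr hγs₀⟩

theorem stmt3_general (t0 t1 xmin xmax : ℝ) (ht : t0 < t1) (hx : xmin < xmax)
    (G : ℝ → ℝ) (hGcont : ContinuousOn G (Set.Icc t0 t1))
    (hGpos : ∀ t ∈ Set.Icc t0 t1, 0 < G t)
    (ψ1 ψ2 : ℝ → ℝ → ℝ)
    (hC1 : ContDiffOn ℝ 1 (fun p : ℝ × ℝ => ψ1 p.1 p.2) (Set.Icc t0 t1 ×ˢ Set.Icc xmin xmax))
    (hC2 : ContDiffOn ℝ 1 (fun p : ℝ × ℝ => ψ2 p.1 p.2) (Set.Icc t0 t1 ×ˢ Set.Icc xmin xmax))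
    (hPDE1 : ∀ t ∈ Set.Icc t0 t1, ∀ x ∈ Set.Icc xmin xmax,
      derivWithin (fun s => ψ1 s x) (Set.Icc t0 t1) t
        + G t * derivWithin (fun ξ => ψ1 t ξ) (Set.Icc xmin xmax) x = 0)
    (hPDE2 : ∀ t ∈ Set.Icc t0 t1, ∀ x ∈ Set.Icc xmin xmax,
      derivWithin (fun s => ψ2 s x) (Set.Icc t0 t1) t
        + G t * derivWithin (fun ξ => ψ2 t ξ) (Set.Icc xmin xmax) x = 0)
    (hinit : ∀ x ∈ Set.Icc xmin xmax, ψ1 t0 x = ψ2 t0 x)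
    (hbdry : ∀ t ∈ Set.Icc t0 t1, ψ1 t xmin = ψ2 t xmin) :
    ∀ t ∈ Set.Icc t0 t1, ∀ x ∈ Set.Icc xmin xmax, ψ1 t x = ψ2 t x := by
  intro T hT X hX
  -- a continuous extension of `G` to `ℝ`, so that the characteristic is defined globally
  set g : ℝ → ℝ := fun u => G (projIcc t0 t1 ht.le u)
  have hg : Continuous g :=
    hGcont.comp_continuous continuous_projIcc.subtype_val fun u => (projIcc t0 t1 ht.le u).2
  obtain ⟨γ, hγT, hγ⟩ := exists_hasDerivAt_eq hg T X
  have hmono : Monotone γ :=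
    monotone_of_hasDerivAt_nonneg hγ fun u => (hGpos _ (projIcc t0 t1 ht.le u).2).le
  obtain ⟨s₀, hs₀, hγs₀, hentry⟩ := exists_entry_time
    (continuous_iff_continuousAt.2 fun u => (hγ u).continuousAt) hT.1 (hγT ▸ hX.1)
  have hmaps : MapsTo (fun u => (u, γ u)) (Icc s₀ T) (Icc t0 t1 ×ˢ Icc xmin xmax) :=
    fun u hu => ⟨⟨hs₀.1.trans hu.1, hu.2.trans hT.2⟩,
      hγs₀.trans (hmono hu.1), (hmono hu.2).trans (hγT ▸ hX.2)⟩
  have hchar : ∀ u ∈ Icc s₀ T, HasDerivWithinAt γ (G u) (Icc s₀ T) u := fun u hu => by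
    simpa [g, projIcc_of_mem ht.le (hmaps hu).1] using (hγ u).hasDerivWithinAt
  have hIt := uniqueDiffOn_Icc ht
  have hIx := uniqueDiffOn_Icc hx
  rw [← hγT,
    ← apply_eq_of_transport hIt hIx (hC1.differentiableOn one_ne_zero) hPDE1 hs₀.2 hmaps hchar,
    ← apply_eq_of_transport hIt hIx (hC2.differentiableOn one_ne_zero) hPDE2 hs₀.2 hmaps hchar]
  rcases hentry with rfl | hγx
  · exact hinit _ (hmaps (left_mem_Icc.2 hs₀.2)).2
  · exact hγx ▸ hbdry s₀ (hmaps (left_mem_Icc.2 hs₀.2)).1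

/-- Uniqueness of classical solutions of the batch-crystallization transport equation
`∂ₜψ + G(t) ∂ₓψ = 0` on `[t0,t1] × [xmin,xmax]`: two C¹ solutions with the same initial datum
and the same boundary datum at `x = xmin` coincide. -/
theorem stmt3 (t0 t1 xmin xmax : ℝ) (ht : t0 < t1) (hx0 : 0 ≤ xmin) (hx : xmin < xmax)
    (G : ℝ → ℝ) (hGcont : ContinuousOn G (Set.Icc t0 t1))
    (hGpos : ∀ t ∈ Set.Icc t0 t1, 0 < G t)
    (ψ1 ψ2 : ℝ → ℝ → ℝ)
    (hC1 : ContDiffOn ℝ 1 (fun p : ℝ × ℝ => ψ1 p.1 p.2) (Set.Icc t0 t1 ×ˢ Set.Icc xmin xmax))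
    (hC2 : ContDiffOn ℝ 1 (fun p : ℝ × ℝ => ψ2 p.1 p.2) (Set.Icc t0 t1 ×ˢ Set.Icc xmin xmax))
    (hPDE1 : ∀ t ∈ Set.Icc t0 t1, ∀ x ∈ Set.Icc xmin xmax,
      derivWithin (fun s => ψ1 s x) (Set.Icc t0 t1) t
        + G t * derivWithin (fun ξ => ψ1 t ξ) (Set.Icc xmin xmax) x = 0)
    (hPDE2 : ∀ t ∈ Set.Icc t0 t1, ∀ x ∈ Set.Icc xmin xmax,
      derivWithin (fun s => ψ2 s x) (Set.Icc t0 t1) t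
        + G t * derivWithin (fun ξ => ψ2 t ξ) (Set.Icc xmin xmax) x = 0)
    (hinit : ∀ x ∈ Set.Icc xmin xmax, ψ1 t0 x = ψ2 t0 x)
    (hbdry : ∀ t ∈ Set.Icc t0 t1, ψ1 t xmin = ψ2 t xmin) :
    ∀ t ∈ Set.Icc t0 t1, ∀ x ∈ Set.Icc xmin xmax, ψ1 t x = ψ2 t x :=
  stmt3_general t0 t1 xmin xmax ht hx G hGcont hGpos ψ1 ψ2 hC1 hC2 hPDE1 hPDE2 hinit hbdry
end

section
/- Fix real numbers t0 < t1 and 0 ≤ x_min < x_max. Let ψ : [t0,t1] × [x_min,x_max] → ℝ be C¹ and satisfy ∂_t ψ(t,x) + ∂_x ψ(t,x) = 0 for all (t,x), with boundary values ψ(t, x_min) = u(t) and ψ(t, x_max) = 0 for all t ∈ [t0,t1]. Define y(t) = ∫_{x_min}^{x_max} x³ ψ(t,x) dx. Then y is differentiable on [t0,t1] and y′(t) = 3 ∫_{x_min}^{x_max} x² ψ(t,x) dx + x_min³ u(t) for all t ∈ [t0,t1]. -/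
/-!
Leibniz's rule moves the time derivative under the integral, giving `∫ x³ ∂ₜψ(t, x) dx`. The
transport equation turns this into `-∫ x³ ∂ₓψ(t, x) dx`, and an integration by parts leaves
`3 ∫ x² ψ(t, x) dx` plus the boundary term `xmin³ ψ(t, xmin) = xmin³ u(t)`; the term at `xmax`
vanishes. Leibniz's rule is needed on the closed rectangle, with one-sided derivatives at the ends
of the time interval: there it follows from writing `ψ(s, x) - ψ(t0, x)` as a time integral of
`∂ₜψ` and exchanging the order of integration.
-/

open Set Function MeasureTheory intervalIntegral

section ParametricIntegral

variable {E : Type*} [NormedAddCommGroup E] [NormedSpace ℝ E]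

theorem continuousOn_intervalIntegral_of_continuousOn_uncurry {X : Type*} [TopologicalSpace X]
    [FirstCountableTopology X] {s : Set X} {f : X → ℝ → E} {c d : ℝ} (hs : IsCompact s)
    (hf : ContinuousOn (uncurry f) (s ×ˢ uIcc c d)) :
    ContinuousOn (fun p => ∫ x in c..d, f p x) s := by
  obtain ⟨M, hM⟩ := (hs.prod isCompact_uIcc).exists_bound_of_continuousOn hf
  intro p hp
  refine continuousWithinAt_of_dominated_interval (bound := fun _ => M) ?_ ?_
    intervalIntegrable_const ?_
  · filter_upwards [self_mem_nhdsWithin] with q hq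
    exact ((hf.comp (continuousOn_const.prodMk continuousOn_id) fun x hx => ⟨hq, hx⟩).mono
      uIoc_subset_uIcc).aestronglyMeasurable measurableSet_uIoc
  · filter_upwards [self_mem_nhdsWithin] with q hq
    exact Filter.Eventually.of_forall fun x hx => hM (q, x) ⟨hq, uIoc_subset_uIcc hx⟩
  · refine Filter.Eventually.of_forall fun x hx => ?_
    exact (hf.comp (continuousOn_id.prodMk continuousOn_const) fun q hq =>
      ⟨hq, uIoc_subset_uIcc hx⟩) p hp

variable [CompleteSpace E]

theorem hasDerivWithinAt_intervalIntegral_of_continuousOn {f f' : ℝ → ℝ → E} {a b c d t : ℝ}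
    (hf : ContinuousOn (uncurry f) (Icc a b ×ˢ uIcc c d))
    (hf' : ContinuousOn (uncurry f') (Icc a b ×ˢ uIcc c d))
    (hderiv : ∀ s ∈ Icc a b, ∀ x ∈ uIcc c d, HasDerivWithinAt (f · x) (f' s x) (Icc a b) s)
    (ht : t ∈ Icc a b) :
    HasDerivWithinAt (fun s => ∫ x in c..d, f s x) (∫ x in c..d, f' t x) (Icc a b) t := by
  have ha : a ∈ Icc a b := left_mem_Icc.2 (ht.1.trans ht.2)
  have hslice {g : ℝ → ℝ → E} (hg : ContinuousOn (uncurry g) (Icc a b ×ˢ uIcc c d))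
      {s : ℝ} (hs : s ∈ Icc a b) : IntervalIntegrable (g s) volume c d :=
    (hg.comp (continuousOn_const.prodMk continuousOn_id) fun x hx => ⟨hs, hx⟩)
      |>.intervalIntegrable
  set G : ℝ → E := fun τ => ∫ x in c..d, f' τ x
  have hG : ContinuousOn G (Icc a b) :=
    continuousOn_intervalIntegral_of_continuousOn_uncurry isCompact_Icc hf'
  have hFTC : ∀ s ∈ Icc a b, ∀ x ∈ uIcc c d, ∫ τ in a..s, f' τ x = f s x - f a x := by
    intro s hs x hx
    have hsub : Icc a s ⊆ Icc a b := Icc_subset_Icc_right hs.2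
    refine integral_eq_sub_of_hasDerivAt_of_le hs.1
      (fun τ hτ => (hderiv τ (hsub hτ) x hx).continuousWithinAt.mono hsub)
      (fun τ hτ => (hderiv τ (hsub (Ioo_subset_Icc_self hτ)) x hx).hasDerivAt
        (Icc_mem_nhds hτ.1 (hτ.2.trans_le hs.2))) ?_
    refine ContinuousOn.intervalIntegrable ?_
    rw [uIcc_of_le hs.1]
    exact hf'.comp (continuousOn_id.prodMk continuousOn_const) fun τ hτ => ⟨hsub hτ, hx⟩
  have hprimitive : ∀ s ∈ Icc a b,
      ∫ x in c..d, f s x = (∫ x in c..d, f a x) + ∫ τ in a..s, G τ := by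
    intro s hs
    have hsub : uIoc a s ×ˢ uIoc c d ⊆ Icc a b ×ˢ uIcc c d := by
      rw [uIoc_of_le hs.1]
      exact prod_mono (Ioc_subset_Icc_self.trans (Icc_subset_Icc_right hs.2)) uIoc_subset_uIcc
    have hint : IntegrableOn (uncurry f') (uIoc a s ×ˢ uIoc c d) :=
      (hf'.integrableOn_compact (isCompact_Icc.prod isCompact_uIcc)).mono_set hsub
    calc ∫ x in c..d, f s x
        = (∫ x in c..d, f a x) + ∫ x in c..d, (f s x - f a x) := by
          rw [integral_sub (hslice hf hs) (hslice hf ha)]; abel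
      _ = (∫ x in c..d, f a x) + ∫ x in c..d, ∫ τ in a..s, f' τ x := by
          rw [integral_congr fun x hx => (hFTC s hs x hx).symm]
      _ = (∫ x in c..d, f a x) + ∫ τ in a..s, G τ := by
          rw [intervalIntegral_intervalIntegral_swap hint]
  have : Fact (t ∈ Icc a b) := ⟨ht⟩
  have hG' : HasDerivWithinAt (fun s => ∫ τ in a..s, G τ) (G t) (Icc a b) t :=
    integral_hasDerivWithinAt_right
      ((hG.mono (Icc_subset_Icc_right ht.2)).intervalIntegrable_of_Icc ht.1)
      (hG.stronglyMeasurableAtFilter_nhdsWithin measurableSet_Icc t) (hG t ht)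
  exact (hG'.const_add _).congr hprimitive (hprimitive t ht)

end ParametricIntegral

theorem integral_pow_succ_mul_deriv_eq {v v' : ℝ → ℝ} {a b : ℝ} (n : ℕ)
    (hv : ∀ x ∈ uIcc a b, HasDerivWithinAt v (v' x) (uIcc a b) x)
    (hv' : IntervalIntegrable v' volume a b) :
    ∫ x in a..b, x ^ (n + 1) * v' x
      = b ^ (n + 1) * v b - a ^ (n + 1) * v a - (n + 1) * ∫ x in a..b, x ^ n * v x := by
  rw [← intervalIntegral.integral_const_mul]
  simp only [← mul_assoc]
  refine integral_mul_deriv_eq_deriv_mul_of_hasDerivWithinAt (fun x _ => ?_) hv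
    ((by fun_prop : Continuous fun x : ℝ => (n + 1) * x ^ n).intervalIntegrable _ _) hv'
  exact (hasDerivAt_pow (n + 1) x).hasDerivWithinAt.congr_deriv (by push_cast; ring)

section PartialDerivatives

variable {F : Type*} [NormedAddCommGroup F] [NormedSpace ℝ F] {f : ℝ → ℝ → F}
  {s t : Set ℝ} {a b : ℝ}

theorem HasFDerivWithinAt.hasDerivWithinAt_uncurry_left {f' : ℝ × ℝ →L[ℝ] F}
    (hf : HasFDerivWithinAt (uncurry f) f' (s ×ˢ t) (a, b)) (hb : b ∈ t) :
    HasDerivWithinAt (f · b) (f' (1, 0)) s a :=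
  hf.comp_hasDerivWithinAt (f := fun τ => (τ, b)) a
    ((hasDerivWithinAt_id a s).prodMk (hasDerivWithinAt_const a s b))
    fun _ hτ => mk_mem_prod hτ hb

theorem HasFDerivWithinAt.hasDerivWithinAt_uncurry_right {f' : ℝ × ℝ →L[ℝ] F}
    (hf : HasFDerivWithinAt (uncurry f) f' (s ×ˢ t) (a, b)) (ha : a ∈ s) :
    HasDerivWithinAt (f a ·) (f' (0, 1)) t b :=
  hf.comp_hasDerivWithinAt (f := fun ξ => (a, ξ)) b
    ((hasDerivWithinAt_const b t a).prodMk (hasDerivWithinAt_id b t))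
    fun _ hξ => mk_mem_prod ha hξ

theorem DifferentiableOn.hasDerivWithinAt_uncurry_left
    (hf : DifferentiableOn ℝ (uncurry f) (s ×ˢ t)) (ha : a ∈ s) (hb : b ∈ t) :
    HasDerivWithinAt (f · b) (derivWithin (f · b) s a) s a :=
  ((hf _ ⟨ha, hb⟩).hasFDerivWithinAt.hasDerivWithinAt_uncurry_left hb).differentiableWithinAt
    |>.hasDerivWithinAt

theorem DifferentiableOn.hasDerivWithinAt_uncurry_right
    (hf : DifferentiableOn ℝ (uncurry f) (s ×ˢ t)) (ha : a ∈ s) (hb : b ∈ t) :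
    HasDerivWithinAt (f a ·) (derivWithin (f a ·) t b) t b :=
  ((hf _ ⟨ha, hb⟩).hasFDerivWithinAt.hasDerivWithinAt_uncurry_right ha).differentiableWithinAt
    |>.hasDerivWithinAt

theorem ContDiffOn.continuousOn_derivWithin_uncurry_left
    (hf : ContDiffOn ℝ 1 (uncurry f) (s ×ˢ t)) (hs : UniqueDiffOn ℝ s) (ht : UniqueDiffOn ℝ t) :
    ContinuousOn (uncurry fun τ x => derivWithin (f · x) s τ) (s ×ˢ t) := by
  refine ((hf.continuousOn_fderivWithin (hs.prod ht) le_rfl).clm_apply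
    (continuousOn_const (c := ((1 : ℝ), (0 : ℝ))))).congr fun ⟨τ, x⟩ hp => ?_
  exact ((hf.differentiableOn one_ne_zero _ hp).hasFDerivWithinAt.hasDerivWithinAt_uncurry_left
    hp.2).derivWithin (hs τ hp.1)

theorem ContDiffOn.continuousOn_derivWithin_uncurry_right
    (hf : ContDiffOn ℝ 1 (uncurry f) (s ×ˢ t)) (hs : UniqueDiffOn ℝ s) (ht : UniqueDiffOn ℝ t) :
    ContinuousOn (uncurry fun τ x => derivWithin (f τ ·) t x) (s ×ˢ t) := by
  refine ((hf.continuousOn_fderivWithin (hs.prod ht) le_rfl).clm_apply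
    (continuousOn_const (c := ((0 : ℝ), (1 : ℝ))))).congr fun ⟨τ, x⟩ hp => ?_
  exact ((hf.differentiableOn one_ne_zero _ hp).hasFDerivWithinAt.hasDerivWithinAt_uncurry_right
    hp.1).derivWithin (ht x hp.2)

end PartialDerivatives

theorem stmt5_general (t0 t1 xmin xmax : ℝ) (ht : t0 < t1) (hx : xmin < xmax)
    (ψ : ℝ → ℝ → ℝ) (u : ℝ → ℝ)
    (hC : ContDiffOn ℝ 1 (fun p : ℝ × ℝ => ψ p.1 p.2) (Set.Icc t0 t1 ×ˢ Set.Icc xmin xmax))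
    (hPDE : ∀ t ∈ Set.Icc t0 t1, ∀ x ∈ Set.Icc xmin xmax,
      derivWithin (fun s => ψ s x) (Set.Icc t0 t1) t
        + derivWithin (fun ξ => ψ t ξ) (Set.Icc xmin xmax) x = 0)
    (hbmin : ∀ t ∈ Set.Icc t0 t1, ψ t xmin = u t)
    (hbmax : ∀ t ∈ Set.Icc t0 t1, ψ t xmax = 0) :
    ∀ t ∈ Set.Icc t0 t1,
      HasDerivWithinAt (fun s => ∫ x in xmin..xmax, x ^ 3 * ψ s x)
        ((3 * ∫ x in xmin..xmax, x ^ 2 * ψ t x) + xmin ^ 3 * u t)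
        (Set.Icc t0 t1) t := by
  intro t htI
  have hI := uniqueDiffOn_Icc ht
  have hJ := uniqueDiffOn_Icc hx
  have hdiff := hC.differentiableOn one_ne_zero
  have hleibniz : HasDerivWithinAt (fun s => ∫ x in xmin..xmax, x ^ 3 * ψ s x)
      (∫ x in xmin..xmax, x ^ 3 * derivWithin (ψ · x) (Icc t0 t1) t) (Icc t0 t1) t := by
    refine hasDerivWithinAt_intervalIntegral_of_continuousOn (f := fun s x => x ^ 3 * ψ s x)
      (f' := fun s x => x ^ 3 * derivWithin (ψ · x) (Icc t0 t1) s) ?_ ?_ ?_ htI <;>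
      rw [uIcc_of_le hx.le]
    · exact (continuous_snd.pow 3).continuousOn.mul hC.continuousOn
    · exact (continuous_snd.pow 3).continuousOn.mul
        (hC.continuousOn_derivWithin_uncurry_left hI hJ)
    · exact fun s hs x hxJ => (hdiff.hasDerivWithinAt_uncurry_left hs hxJ).const_mul (x ^ 3)
  have hψx : ContinuousOn (derivWithin (ψ t ·) (Icc xmin xmax)) (Icc xmin xmax) :=
    (hC.continuousOn_derivWithin_uncurry_right hI hJ).comp
      (continuousOn_const.prodMk continuousOn_id) fun _ hxJ => mk_mem_prod htI hxJ
  have hparts := integral_pow_succ_mul_deriv_eq 2 (v := ψ t) (by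
    rw [uIcc_of_le hx.le]; exact fun _ hxJ => hdiff.hasDerivWithinAt_uncurry_right htI hxJ)
    (hψx.intervalIntegrable_of_Icc hx.le)
  norm_num at hparts
  convert hleibniz using 1
  calc (3 * ∫ x in xmin..xmax, x ^ 2 * ψ t x) + xmin ^ 3 * u t
      = -∫ x in xmin..xmax, x ^ 3 * derivWithin (ψ t ·) (Icc xmin xmax) x := by
        rw [hparts, hbmin t htI, hbmax t htI]
        ring
    _ = ∫ x in xmin..xmax, x ^ 3 * derivWithin (ψ · x) (Icc t0 t1) t := by
        rw [← intervalIntegral.integral_neg]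
        refine integral_congr fun x hxJ => ?_
        rw [uIcc_of_le hx.le] at hxJ
        rw [eq_neg_of_add_eq_zero_left (hPDE t htI x hxJ), mul_neg]

/-- First derivative identity for the third-moment output of the unit-speed transport
equation `∂ₜψ + ∂ₓψ = 0` with `ψ(t, xmax) = 0`:
`y'(t) = 3 ∫ x² ψ(t,x) dx + xmin³ u(t)` where `u(t) = ψ(t, xmin)`. -/
theorem stmt5 (t0 t1 xmin xmax : ℝ) (ht : t0 < t1) (hx0 : 0 ≤ xmin) (hx : xmin < xmax)
    (ψ : ℝ → ℝ → ℝ) (u : ℝ → ℝ)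
    (hC : ContDiffOn ℝ 1 (fun p : ℝ × ℝ => ψ p.1 p.2) (Set.Icc t0 t1 ×ˢ Set.Icc xmin xmax))
    (hPDE : ∀ t ∈ Set.Icc t0 t1, ∀ x ∈ Set.Icc xmin xmax,
      derivWithin (fun s => ψ s x) (Set.Icc t0 t1) t
        + derivWithin (fun ξ => ψ t ξ) (Set.Icc xmin xmax) x = 0)
    (hbmin : ∀ t ∈ Set.Icc t0 t1, ψ t xmin = u t)
    (hbmax : ∀ t ∈ Set.Icc t0 t1, ψ t xmax = 0) :
    ∀ t ∈ Set.Icc t0 t1,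
      HasDerivWithinAt (fun s => ∫ x in xmin..xmax, x ^ 3 * ψ s x)
        ((3 * ∫ x in xmin..xmax, x ^ 2 * ψ t x) + xmin ^ 3 * u t)
        (Set.Icc t0 t1) t :=
  stmt5_general t0 t1 xmin xmax ht hx ψ u hC hPDE hbmin hbmax
end

section
/- Fix real numbers t0 < t1 and 0 ≤ x_min < x_max. Let ψ : [t0,t1] × [x_min,x_max] → ℝ be C² and satisfy ∂_t ψ(t,x) + ∂_x ψ(t,x) = 0 for all (t,x), with boundary values ψ(t, x_min) = u(t) and ψ(t, x_max) = 0 for all t ∈ [t0,t1], where u is C¹. Define y(t) = ∫_{x_min}^{x_max} x³ ψ(t,x) dx. Then y is twice differentiable on [t0,t1] and y″(t) = 6 ∫_{x_min}^{x_max} x ψ(t,x) dx + 3 x_min² u(t) + x_min³ u′(t) for all t ∈ [t0,t1]. -/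
/-!
Write `y_m(t) = ∫ x^m ψ(t,x) dx`. Differentiating under the integral sign, replacing `∂ₜψ` by
`-∂ₓψ` and integrating by parts against the boundary condition `ψ(t, x_max) = 0` gives
`y_{m+1}' = x_min^{m+1} u + (m+1) y_m`. Applying this with `m = 2` and then with `m = 1` yields
`y₃'' = x_min³ u' + 3 x_min² u + 6 y₁`.
-/

open Set MeasureTheory Function

namespace intervalIntegral

variable {a b c d : ℝ}

theorem integral_integral_swap_of_continuousOn {F : ℝ → ℝ → ℝ} (hab : a ≤ b) (hcd : c ≤ d)
    (hF : ContinuousOn (uncurry F) (Icc a b ×ˢ Icc c d)) :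
    ∫ x in a..b, ∫ y in c..d, F x y = ∫ y in c..d, ∫ x in a..b, F x y := by
  have hint : Integrable (uncurry F)
      ((volume.restrict (Ioc a b)).prod (volume.restrict (Ioc c d))) := by
    rw [Measure.prod_restrict]
    exact (hF.integrableOn_compact (isCompact_Icc.prod isCompact_Icc)).mono_set
      (prod_mono Ioc_subset_Icc_self Ioc_subset_Icc_self)
  simpa only [integral_of_le hab, integral_of_le hcd] using integral_integral_swap hint

theorem continuousOn_integral_of_continuousOn {X : Type*} [TopologicalSpace X]
    [FirstCountableTopology X] {s : Set X}
    {F : X → ℝ → ℝ} (hs : IsCompact s) (hcd : c ≤ d)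
    (hF : ContinuousOn (uncurry F) (s ×ˢ Icc c d)) :
    ContinuousOn (fun t => ∫ x in c..d, F t x) s := by
  obtain ⟨C, hC⟩ := (hs.prod isCompact_Icc).exists_bound_of_continuousOn hF
  intro t ht
  refine continuousWithinAt_of_dominated_interval (bound := fun _ => C) ?_ ?_
    intervalIntegrable_const ?_ <;> simp only [uIoc_of_le hcd]
  · filter_upwards [self_mem_nhdsWithin] with r hr
    exact ((hF.uncurry_left r hr).mono Ioc_subset_Icc_self).aestronglyMeasurable measurableSet_Ioc
  · filter_upwards [self_mem_nhdsWithin] with r hr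
    exact ae_of_all _ fun x hx => hC (r, x) ⟨hr, Ioc_subset_Icc_self hx⟩
  · exact ae_of_all _ fun x hx => hF.uncurry_right x (Ioc_subset_Icc_self hx) t ht

theorem hasDerivWithinAt_integral_of_continuousOn {F F' : ℝ → ℝ → ℝ} (hcd : c ≤ d)
    (hF : ContinuousOn (uncurry F) (Icc a b ×ˢ Icc c d))
    (hF' : ContinuousOn (uncurry F') (Icc a b ×ˢ Icc c d))
    (hderiv : ∀ t ∈ Icc a b, ∀ x ∈ Icc c d, HasDerivWithinAt (F · x) (F' t x) (Icc a b) t)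
    {t : ℝ} (ht : t ∈ Icc a b) :
    HasDerivWithinAt (fun s => ∫ x in c..d, F s x) (∫ x in c..d, F' t x) (Icc a b) t := by
  set G := fun r => ∫ x in c..d, F' r x
  have hG : ContinuousOn G (Icc a b) :=
    continuousOn_integral_of_continuousOn isCompact_Icc hcd hF'
  -- FTC in `t` for each `x`, then Fubini, exhibits `s ↦ ∫ F s` as a primitive of `G`.
  have hprimitive : ∀ s ∈ Icc a b,
      ∫ x in c..d, F s x = (∫ x in c..d, F a x) + ∫ r in a..s, G r := by
    intro s hs
    have hsub : Icc a s ⊆ Icc a b := Icc_subset_Icc_right hs.2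
    have hftc : ∀ x ∈ Icc c d, F s x = F a x + ∫ r in a..s, F' r x := by
      intro x hx
      rw [integral_eq_sub_of_hasDeriv_right_of_le hs.1 ((hF.uncurry_right x hx).mono hsub)
        (fun r hr => ((hderiv r (hsub (Ioo_subset_Icc_self hr)) x hx).hasDerivAt
          (Icc_mem_nhds hr.1 (hr.2.trans_le hs.2))).hasDerivWithinAt)
        (((hF'.uncurry_right x hx).mono hsub).intervalIntegrable_of_Icc hs.1)]
      ring
    have hswap : ContinuousOn (uncurry fun x r => F' r x) (Icc c d ×ˢ Icc a s) :=
      hF'.comp continuous_swap.continuousOn fun p hp => ⟨hsub hp.2, hp.1⟩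
    have hFa : IntervalIntegrable (F a) volume c d :=
      (hF.uncurry_left a (left_mem_Icc.2 (hs.1.trans hs.2))).intervalIntegrable_of_Icc hcd
    have hinner : IntervalIntegrable (fun x => ∫ r in a..s, F' r x) volume c d :=
      (continuousOn_integral_of_continuousOn isCompact_Icc hs.1 hswap).intervalIntegrable_of_Icc hcd
    calc ∫ x in c..d, F s x = ∫ x in c..d, (F a x + ∫ r in a..s, F' r x) :=
          integral_congr fun x hx => hftc x (by rwa [uIcc_of_le hcd] at hx)
      _ = (∫ x in c..d, F a x) + ∫ x in c..d, ∫ r in a..s, F' r x := integral_add hFa hinner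
      _ = (∫ x in c..d, F a x) + ∫ r in a..s, G r := by
          rw [integral_integral_swap_of_continuousOn hcd hs.1 hswap]
  have : Fact (t ∈ Icc a b) := ⟨ht⟩
  have hGprim : HasDerivWithinAt (fun s => ∫ r in a..s, G r) (G t) (Icc a b) t :=
    integral_hasDerivWithinAt_right
      ((hG.mono (Icc_subset_Icc_right ht.2)).intervalIntegrable_of_Icc ht.1)
      (hG.stronglyMeasurableAtFilter_nhdsWithin measurableSet_Icc t) (hG t ht)
  exact (hGprim.const_add _).congr hprimitive (hprimitive t ht)

end intervalIntegral

section PartialDerivatives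

variable {𝕜 E : Type*} [NontriviallyNormedField 𝕜] [NormedAddCommGroup E] [NormedSpace 𝕜 E]
  {f : 𝕜 × 𝕜 → E} {f' : 𝕜 × 𝕜 →L[𝕜] E} {s t : Set 𝕜} {a b : 𝕜}

theorem HasFDerivWithinAt.hasDerivWithinAt_partial_fst
    (h : HasFDerivWithinAt f f' (s ×ˢ t) (a, b)) (hb : b ∈ t) :
    HasDerivWithinAt (fun x => f (x, b)) (f' (1, 0)) s a :=
  h.comp_hasDerivWithinAt a ((hasDerivAt_id a).prodMk (hasDerivAt_const a b)).hasDerivWithinAt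
    fun _ hx => mk_mem_prod hx hb

theorem HasFDerivWithinAt.hasDerivWithinAt_partial_snd
    (h : HasFDerivWithinAt f f' (s ×ˢ t) (a, b)) (ha : a ∈ s) :
    HasDerivWithinAt (fun y => f (a, y)) (f' (0, 1)) t b :=
  h.comp_hasDerivWithinAt b ((hasDerivAt_const b a).prodMk (hasDerivAt_id b)).hasDerivWithinAt
    fun _ hy => mk_mem_prod ha hy

end PartialDerivatives

section Transport

variable {t0 t1 xmin xmax t : ℝ} {ψ : ℝ → ℝ → ℝ}

theorem hasDerivWithinAt_weighted_integral_of_transport {w w' : ℝ → ℝ}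
    (ht : t0 < t1) (hx : xmin < xmax)
    (hψ : ContDiffOn ℝ 1 (uncurry ψ) (Icc t0 t1 ×ˢ Icc xmin xmax))
    (hPDE : ∀ x ∈ Icc xmin xmax,
      derivWithin (ψ · x) (Icc t0 t1) t + derivWithin (ψ t) (Icc xmin xmax) x = 0)
    (hbmax : ψ t xmax = 0) (hw : ∀ x, HasDerivAt w (w' x) x) (hw' : Continuous w')
    (htm : t ∈ Icc t0 t1) :
    HasDerivWithinAt (fun s => ∫ x in xmin..xmax, w x * ψ s x)
      (w xmin * ψ t xmin + ∫ x in xmin..xmax, w' x * ψ t x) (Icc t0 t1) t := by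
  set D := fderivWithin ℝ (uncurry ψ) (Icc t0 t1 ×ˢ Icc xmin xmax)
  have hD : ∀ p ∈ Icc t0 t1 ×ˢ Icc xmin xmax,
      HasFDerivWithinAt (uncurry ψ) (D p) (Icc t0 t1 ×ˢ Icc xmin xmax) p := fun p hp =>
    (hψ.differentiableOn one_ne_zero p hp).hasFDerivWithinAt
  have hDcont : ContinuousOn D (Icc t0 t1 ×ˢ Icc xmin xmax) :=
    hψ.continuousOn_fderivWithin ((uniqueDiffOn_Icc ht).prod (uniqueDiffOn_Icc hx)) le_rfl
  have hwcont : Continuous w := continuous_iff_continuousAt.2 fun x => (hw x).continuousAt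
  have hψt : ∀ s ∈ Icc t0 t1, ∀ x ∈ Icc xmin xmax,
      HasDerivWithinAt (ψ · x) (D (s, x) (1, 0)) (Icc t0 t1) s := fun s hs x hxm =>
    (hD (s, x) ⟨hs, hxm⟩).hasDerivWithinAt_partial_fst hxm
  have hψx : ∀ x ∈ Icc xmin xmax, HasDerivWithinAt (ψ t) (D (t, x) (0, 1)) (Icc xmin xmax) x :=
    fun x hxm => (hD (t, x) ⟨htm, hxm⟩).hasDerivWithinAt_partial_snd htm
  have hψt_eq : ∀ x ∈ Icc xmin xmax, D (t, x) (1, 0) = -D (t, x) (0, 1) := by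
    intro x hxm
    have h := hPDE x hxm
    rw [(hψt t htm x hxm).derivWithin (uniqueDiffOn_Icc ht t htm),
      (hψx x hxm).derivWithin (uniqueDiffOn_Icc hx x hxm)] at h
    linarith
  have hy : HasDerivWithinAt (fun s => ∫ x in xmin..xmax, w x * ψ s x)
      (∫ x in xmin..xmax, w x * D (t, x) (1, 0)) (Icc t0 t1) t :=
    intervalIntegral.hasDerivWithinAt_integral_of_continuousOn (F := fun s x => w x * ψ s x)
      (F' := fun s x => w x * D (s, x) (1, 0)) hx.le
      ((hwcont.comp continuous_snd).continuousOn.mul hψ.continuousOn)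
      ((hwcont.comp continuous_snd).continuousOn.mul (hDcont.clm_apply continuousOn_const))
      (fun s hs x hxm => (hψt s hs x hxm).const_mul (w x)) htm
  have hibp : ∫ x in xmin..xmax, w x * D (t, x) (0, 1)
      = w xmax * ψ t xmax - w xmin * ψ t xmin - ∫ x in xmin..xmax, w' x * ψ t x :=
    intervalIntegral.integral_mul_deriv_eq_deriv_mul_of_hasDerivWithinAt
      (fun x _ => (hw x).hasDerivWithinAt) (by rwa [uIcc_of_le hx.le])
      (hw'.intervalIntegrable _ _)
      ((ContinuousOn.uncurry_left (f := fun s x => D (s, x) (0, 1)) t htm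
        (hDcont.clm_apply continuousOn_const)).intervalIntegrable_of_Icc hx.le)
  have hPDE_integral : ∫ x in xmin..xmax, w x * D (t, x) (1, 0)
      = w xmin * ψ t xmin + ∫ x in xmin..xmax, w' x * ψ t x := calc
    _ = ∫ x in xmin..xmax, -(w x * D (t, x) (0, 1)) :=
      intervalIntegral.integral_congr fun x hxm => by
        rw [hψt_eq x (by rwa [uIcc_of_le hx.le] at hxm), mul_neg]
    _ = _ := by rw [intervalIntegral.integral_neg, hibp, hbmax]; ring
  rwa [hPDE_integral] at hy

theorem hasDerivWithinAt_moment_of_transport (ht : t0 < t1) (hx : xmin < xmax)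
    (hψ : ContDiffOn ℝ 1 (uncurry ψ) (Icc t0 t1 ×ˢ Icc xmin xmax))
    (hPDE : ∀ x ∈ Icc xmin xmax,
      derivWithin (ψ · x) (Icc t0 t1) t + derivWithin (ψ t) (Icc xmin xmax) x = 0)
    (hbmax : ψ t xmax = 0) (m : ℕ) (htm : t ∈ Icc t0 t1) :
    HasDerivWithinAt (fun s => ∫ x in xmin..xmax, x ^ (m + 1) * ψ s x)
      (xmin ^ (m + 1) * ψ t xmin + (m + 1) * ∫ x in xmin..xmax, x ^ m * ψ t x) (Icc t0 t1) t := by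
  have h := hasDerivWithinAt_weighted_integral_of_transport (w' := fun x => (m + 1) * x ^ m)
    ht hx hψ hPDE hbmax (fun x => by simpa using hasDerivAt_pow (m + 1) x) (by fun_prop) htm
  simpa only [mul_assoc, intervalIntegral.integral_const_mul] using h

end Transport

theorem stmt6_general (t0 t1 xmin xmax : ℝ) (ht : t0 < t1) (hx : xmin < xmax)
    (ψ : ℝ → ℝ → ℝ) (u : ℝ → ℝ)
    (hC : ContDiffOn ℝ 2 (fun p : ℝ × ℝ => ψ p.1 p.2) (Set.Icc t0 t1 ×ˢ Set.Icc xmin xmax))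
    (hu : ContDiffOn ℝ 1 u (Set.Icc t0 t1))
    (hPDE : ∀ t ∈ Set.Icc t0 t1, ∀ x ∈ Set.Icc xmin xmax,
      derivWithin (fun s => ψ s x) (Set.Icc t0 t1) t
        + derivWithin (fun ξ => ψ t ξ) (Set.Icc xmin xmax) x = 0)
    (hbmin : ∀ t ∈ Set.Icc t0 t1, ψ t xmin = u t)
    (hbmax : ∀ t ∈ Set.Icc t0 t1, ψ t xmax = 0) :
    ∃ y1 : ℝ → ℝ,
      (∀ t ∈ Set.Icc t0 t1,
        HasDerivWithinAt (fun s => ∫ x in xmin..xmax, x ^ 3 * ψ s x) (y1 t)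
          (Set.Icc t0 t1) t) ∧
      (∀ t ∈ Set.Icc t0 t1,
        HasDerivWithinAt y1
          ((6 * ∫ x in xmin..xmax, x * ψ t x) + 3 * xmin ^ 2 * u t
            + xmin ^ 3 * derivWithin u (Set.Icc t0 t1) t)
          (Set.Icc t0 t1) t) := by
  have hmoment (m : ℕ) {t : ℝ} (htm : t ∈ Icc t0 t1) :=
    hasDerivWithinAt_moment_of_transport ht hx (hC.of_le one_le_two) (hPDE t htm) (hbmax t htm)
      m htm
  refine ⟨fun t => xmin ^ 3 * u t + 3 * ∫ x in xmin..xmax, x ^ 2 * ψ t x,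
    fun t htm => ?_, fun t htm => ?_⟩
  · have h2 := hmoment 2 htm
    norm_num [hbmin t htm] at h2
    exact h2
  · have hu' := (hu.differentiableOn one_ne_zero t htm).hasDerivWithinAt
    have h1 := hmoment 1 htm
    norm_num [hbmin t htm] at h1
    exact ((hu'.const_mul (xmin ^ 3)).add (h1.const_mul 3)).congr_deriv (by ring)

/-- Second derivative identity for the third-moment output of the unit-speed transport
equation `∂ₜψ + ∂ₓψ = 0` with `ψ(t, xmax) = 0`:
`y''(t) = 6 ∫ x ψ(t,x) dx + 3 xmin² u(t) + xmin³ u'(t)` where `u(t) = ψ(t, xmin)`. -/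
theorem stmt6 (t0 t1 xmin xmax : ℝ) (ht : t0 < t1) (hx0 : 0 ≤ xmin) (hx : xmin < xmax)
    (ψ : ℝ → ℝ → ℝ) (u : ℝ → ℝ)
    (hC : ContDiffOn ℝ 2 (fun p : ℝ × ℝ => ψ p.1 p.2) (Set.Icc t0 t1 ×ˢ Set.Icc xmin xmax))
    (hu : ContDiffOn ℝ 1 u (Set.Icc t0 t1))
    (hPDE : ∀ t ∈ Set.Icc t0 t1, ∀ x ∈ Set.Icc xmin xmax,
      derivWithin (fun s => ψ s x) (Set.Icc t0 t1) t
        + derivWithin (fun ξ => ψ t ξ) (Set.Icc xmin xmax) x = 0)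
    (hbmin : ∀ t ∈ Set.Icc t0 t1, ψ t xmin = u t)
    (hbmax : ∀ t ∈ Set.Icc t0 t1, ψ t xmax = 0) :
    ∃ y1 : ℝ → ℝ,
      (∀ t ∈ Set.Icc t0 t1,
        HasDerivWithinAt (fun s => ∫ x in xmin..xmax, x ^ 3 * ψ s x) (y1 t)
          (Set.Icc t0 t1) t) ∧
      (∀ t ∈ Set.Icc t0 t1,
        HasDerivWithinAt y1
          ((6 * ∫ x in xmin..xmax, x * ψ t x) + 3 * xmin ^ 2 * u t
            + xmin ^ 3 * derivWithin u (Set.Icc t0 t1) t)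
          (Set.Icc t0 t1) t) :=
  stmt6_general t0 t1 xmin xmax ht hx ψ u hC hu hPDE hbmin hbmax
end

section
/- Fix real numbers t0 < t1 and 0 ≤ x_min < x_max. Let ψ : [t0,t1] × [x_min,x_max] → ℝ be C⁴ and satisfy ∂_t ψ(t,x) + ∂_x ψ(t,x) = 0 for all (t,x), with boundary values ψ(t, x_min) = u(t) and ψ(t, x_max) = 0 for all t ∈ [t0,t1], where u is C³. Define y(t) = ∫_{x_min}^{x_max} x³ ψ(t,x) dx. Then y is four times differentiable on [t0,t1] and y⁗(t) = 6 u(t) + 6 x_min u′(t) + 3 x_min² u″(t) + x_min³ u‴(t) for all t ∈ [t0,t1]. -/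
/-!
A classical solution of `∂ₜψ + ∂ₓψ = 0` has vanishing derivative in the direction `(1, 1)`, so by
the mean value theorem it is constant along the characteristics `t - x = c`, i.e.
`ψ t x = Φ (t - x)` for a continuous profile `Φ`. The moments `Mₙ t = ∫ x in a..b, xⁿ Φ (t - x)`
then satisfy `Mₙ' t = aⁿ Φ (t - a) - bⁿ Φ (t - b) + n Mₙ₋₁ t`: for `n = 0` this is the fundamental
theorem of calculus after substituting `s = t - x`, and `xⁿ⁺¹ = t xⁿ - xⁿ (t - x)` reduces
`Mₙ₊₁` to `n`-th moments of `Φ` and of `s ↦ s Φ s`. With `a = xmin`, `b = xmax` the boundary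
data give `Φ (t - xmin) = u t` and `Φ (t - xmax) = 0`, so each differentiation of `y = M₃`
lowers the moment by one and produces one term in `u`.
-/

set_option autoImplicit false

open Set intervalIntegral

theorem Convex.apply_add_smul_eq_of_hasFDerivWithinAt_apply_eq_zero
    {E F : Type*} [NormedAddCommGroup E] [NormedSpace ℝ E] [NormedAddCommGroup F]
    [NormedSpace ℝ F] {f : E → F} {f' : E → E →L[ℝ] F} {s : Set E} {x v : E} {r : ℝ}
    (hs : Convex ℝ s) (hf : ∀ y ∈ s, HasFDerivWithinAt f (f' y) s y)
    (hv : ∀ y ∈ s, f' y v = 0) (hx : x ∈ s) (hr : x + r • v ∈ s) :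
    f (x + r • v) = f x := by
  set line : ℝ →ᵃ[ℝ] E := AffineMap.lineMap x (x + v)
  have hline : ∀ τ : ℝ, line τ = x + τ • v := fun τ => by
    simp [line, AffineMap.lineMap_apply, add_comm]
  have hS : Convex ℝ (line ⁻¹' s) := hs.affine_preimage line
  have hderiv : ∀ τ ∈ line ⁻¹' s, HasDerivWithinAt (f ∘ line) 0 (line ⁻¹' s) τ := by
    intro τ hτ
    have hlin : HasDerivWithinAt line v (line ⁻¹' s) τ := by
      simp only [funext hline]
      exact ((hasDerivAt_id τ).smul_const v).const_add x |>.hasDerivWithinAt |>.congr_deriv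
        (by simp)
    simpa [hv _ hτ] using (hf _ hτ).comp_hasDerivWithinAt τ hlin (mapsTo_preimage _ _)
  have h := hS.norm_image_sub_le_of_norm_hasDerivWithin_le (C := 0) hderiv (by simp)
    (x := 0) (y := r) (by simpa [hline] using hx) (by simpa [hline] using hr)
  simpa [hline, sub_eq_zero] using h

theorem HasFDerivWithinAt.derivWithin_comp_prodMk_left {F : Type*} [NormedAddCommGroup F]
    [NormedSpace ℝ F] {f : ℝ × ℝ → F} {f' : ℝ × ℝ →L[ℝ] F} {s t : Set ℝ} {a b : ℝ}
    (hf : HasFDerivWithinAt f f' (s ×ˢ t) (a, b)) (hb : b ∈ t) (hs : UniqueDiffWithinAt ℝ s a) :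
    derivWithin (fun a => f (a, b)) s a = f' (1, 0) :=
  (hf.comp_hasDerivWithinAt_of_eq a
    ((hasDerivAt_id a).prodMk (hasDerivAt_const a b)).hasDerivWithinAt
    (fun _ ha => ⟨ha, hb⟩) rfl).derivWithin hs

theorem HasFDerivWithinAt.derivWithin_comp_prodMk_right {F : Type*} [NormedAddCommGroup F]
    [NormedSpace ℝ F] {f : ℝ × ℝ → F} {f' : ℝ × ℝ →L[ℝ] F} {s t : Set ℝ} {a b : ℝ}
    (hf : HasFDerivWithinAt f f' (s ×ˢ t) (a, b)) (ha : a ∈ s) (ht : UniqueDiffWithinAt ℝ t b) :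
    derivWithin (fun b => f (a, b)) t b = f' (0, 1) :=
  (hf.comp_hasDerivWithinAt_of_eq b
    ((hasDerivAt_const b a).prodMk (hasDerivAt_id b)).hasDerivWithinAt
    (fun _ hb => ⟨ha, hb⟩) rfl).derivWithin ht

section Transport

variable {t0 t1 xmin xmax : ℝ} {ψ : ℝ → ℝ → ℝ}

theorem transport_eq_of_sub_eq (ht : t0 < t1) (hx : xmin < xmax)
    (hψ : DifferentiableOn ℝ (fun p : ℝ × ℝ => ψ p.1 p.2) (Icc t0 t1 ×ˢ Icc xmin xmax))
    (hPDE : ∀ t ∈ Icc t0 t1, ∀ x ∈ Icc xmin xmax,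
      derivWithin (fun s => ψ s x) (Icc t0 t1) t
        + derivWithin (fun ξ => ψ t ξ) (Icc xmin xmax) x = 0)
    {t x t' x' : ℝ} (htx : (t, x) ∈ Icc t0 t1 ×ˢ Icc xmin xmax)
    (htx' : (t', x') ∈ Icc t0 t1 ×ˢ Icc xmin xmax) (h : t - x = t' - x') : ψ t' x' = ψ t x := by
  set R := Icc t0 t1 ×ˢ Icc xmin xmax
  have hdiag : ∀ p ∈ R, fderivWithin ℝ (fun p : ℝ × ℝ => ψ p.1 p.2) R p (1, 1) = 0 := by
    rintro ⟨s, ξ⟩ ⟨hs, hξ⟩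
    have hf := (hψ _ ⟨hs, hξ⟩).hasFDerivWithinAt
    rw [show ((1 : ℝ), (1 : ℝ)) = (1, 0) + (0, 1) by simp, map_add,
      ← hf.derivWithin_comp_prodMk_left hξ (uniqueDiffOn_Icc ht s hs),
      ← hf.derivWithin_comp_prodMk_right hs (uniqueDiffOn_Icc hx ξ hξ)]
    exact hPDE s hs ξ hξ
  have hmove : (t, x) + (t' - t) • ((1 : ℝ), (1 : ℝ)) = (t', x') := by
    ext <;> simp only [Prod.fst_add, Prod.snd_add, Prod.smul_mk, smul_eq_mul, mul_one] <;> linarith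
  have hR : Convex ℝ R := (convex_Icc t0 t1).prod (convex_Icc xmin xmax)
  have h := hR.apply_add_smul_eq_of_hasFDerivWithinAt_apply_eq_zero
    (fun p hp => (hψ p hp).hasFDerivWithinAt) hdiag htx (hmove ▸ htx')
  rwa [hmove] at h

theorem exists_continuous_eq_comp_sub (ht : t0 ≤ t1) (hx : xmin ≤ xmax)
    (hψ : ContinuousOn (fun p : ℝ × ℝ => ψ p.1 p.2) (Icc t0 t1 ×ˢ Icc xmin xmax))
    (hconst : ∀ t ∈ Icc t0 t1, ∀ x ∈ Icc xmin xmax, ∀ t' ∈ Icc t0 t1, ∀ x' ∈ Icc xmin xmax,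
      t - x = t' - x' → ψ t' x' = ψ t x) :
    ∃ Φ : ℝ → ℝ, Continuous Φ ∧ ∀ t ∈ Icc t0 t1, ∀ x ∈ Icc xmin xmax, ψ t x = Φ (t - x) := by
  -- `(τ c, τ c - c)` is where the characteristic `t - x = c` enters the rectangle; the
  -- projections only matter for `c` outside the range of `t - x`, and keep `Φ` continuous.
  set τ : ℝ → ℝ := fun c => max t0 (c + xmin)
  refine ⟨fun c => ψ (projIcc t0 t1 ht (τ c)) (projIcc xmin xmax hx (τ c - c)), ?_, ?_⟩
  · exact hψ.comp_continuous
      (f := fun c => ((projIcc t0 t1 ht (τ c) : ℝ), (projIcc xmin xmax hx (τ c - c) : ℝ)))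
      (by fun_prop) fun c => ⟨(projIcc _ _ ht _).2, (projIcc _ _ hx _).2⟩
  · intro t htm x hxm
    have hτ : τ (t - x) ∈ Icc t0 t1 :=
      ⟨le_max_left _ _, max_le ht (by linarith [htm.2, hxm.1])⟩
    have hτx : τ (t - x) - (t - x) ∈ Icc xmin xmax :=
      ⟨by linarith [le_max_right t0 (t - x + xmin)],
        sub_le_iff_le_add'.2 (max_le (by linarith [htm.1, hxm.2]) (by linarith))⟩
    simp only [projIcc_of_mem _ hτ, projIcc_of_mem _ hτx]
    exact (hconst t htm x hxm _ hτ _ hτx (by ring)).symm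

end Transport

noncomputable def shiftMoment (Φ : ℝ → ℝ) (a b : ℝ) (n : ℕ) (t : ℝ) : ℝ :=
  ∫ x in a..b, x ^ n * Φ (t - x)

section ShiftMoment

variable {Φ : ℝ → ℝ} (a b : ℝ)

theorem shiftMoment_succ (hΦ : Continuous Φ) (n : ℕ) (t : ℝ) :
    shiftMoment Φ a b (n + 1) t
      = t * shiftMoment Φ a b n t - shiftMoment (fun s => s * Φ s) a b n t := by
  have hint : ∀ g : ℝ → ℝ, Continuous g → IntervalIntegrable g MeasureTheory.volume a b :=
    fun g hg => hg.intervalIntegrable a b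
  rw [shiftMoment, shiftMoment, shiftMoment, ← integral_const_mul,
    ← integral_sub (hint _ (by fun_prop)) (hint _ (by fun_prop))]
  congr 1 with x
  ring

theorem hasDerivAt_shiftMoment_zero (hΦ : Continuous Φ) (t : ℝ) :
    HasDerivAt (shiftMoment Φ a b 0) (Φ (t - a) - Φ (t - b)) t := by
  obtain ⟨F, hF⟩ : ∃ F : ℝ → ℝ, ∀ s, HasDerivAt F (Φ s) s :=
    ⟨fun s => ∫ r in (0 : ℝ)..s, Φ r, fun s => hΦ.integral_hasStrictDerivAt 0 s |>.hasDerivAt⟩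
  have hrepr : shiftMoment Φ a b 0 = fun t => F (t - a) - F (t - b) := by
    funext t
    simp only [shiftMoment, pow_zero, one_mul, integral_comp_sub_left]
    exact integral_eq_sub_of_hasDerivAt (fun s _ => hF s) (hΦ.intervalIntegrable _ _)
  rw [hrepr]
  exact ((hF _).comp_sub_const t a).sub ((hF _).comp_sub_const t b)

theorem hasDerivAt_shiftMoment (hΦ : Continuous Φ) (n : ℕ) (t : ℝ) :
    HasDerivAt (shiftMoment Φ a b n)
      (a ^ n * Φ (t - a) - b ^ n * Φ (t - b) + n * shiftMoment Φ a b (n - 1) t) t := by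
  induction n generalizing Φ with
  | zero => simpa using hasDerivAt_shiftMoment_zero a b hΦ t
  | succ n ih =>
    have hΨ : Continuous fun s => s * Φ s := by fun_prop
    rw [funext (shiftMoment_succ a b hΦ n)]
    refine (((hasDerivAt_id' t).mul (ih hΦ)).sub (ih hΨ)).congr_deriv ?_
    have hlower : n * shiftMoment Φ a b n t
        = n * (t * shiftMoment Φ a b (n - 1) t - shiftMoment (fun s => s * Φ s) a b (n - 1) t) := by
      cases n with
      | zero => simp
      | succ k => simp [shiftMoment_succ a b hΦ k]
    rw [Nat.add_sub_cancel]
    push_cast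
    linear_combination -hlower

end ShiftMoment

theorem stmt8_general (t0 t1 xmin xmax : ℝ) (ht : t0 < t1) (hx : xmin < xmax)
    (ψ : ℝ → ℝ → ℝ) (u : ℝ → ℝ)
    (hC : ContDiffOn ℝ 4 (fun p : ℝ × ℝ => ψ p.1 p.2) (Set.Icc t0 t1 ×ˢ Set.Icc xmin xmax))
    (hu : ContDiffOn ℝ 3 u (Set.Icc t0 t1))
    (hPDE : ∀ t ∈ Set.Icc t0 t1, ∀ x ∈ Set.Icc xmin xmax,
      derivWithin (fun s => ψ s x) (Set.Icc t0 t1) t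
        + derivWithin (fun ξ => ψ t ξ) (Set.Icc xmin xmax) x = 0)
    (hbmin : ∀ t ∈ Set.Icc t0 t1, ψ t xmin = u t)
    (hbmax : ∀ t ∈ Set.Icc t0 t1, ψ t xmax = 0) :
    ∃ y1 y2 y3 : ℝ → ℝ,
      (∀ t ∈ Set.Icc t0 t1,
        HasDerivWithinAt (fun s => ∫ x in xmin..xmax, x ^ 3 * ψ s x) (y1 t)
          (Set.Icc t0 t1) t) ∧
      (∀ t ∈ Set.Icc t0 t1, HasDerivWithinAt y1 (y2 t) (Set.Icc t0 t1) t) ∧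
      (∀ t ∈ Set.Icc t0 t1, HasDerivWithinAt y2 (y3 t) (Set.Icc t0 t1) t) ∧
      (∀ t ∈ Set.Icc t0 t1,
        HasDerivWithinAt y3
          (6 * u t + 6 * xmin * derivWithin u (Set.Icc t0 t1) t
            + 3 * xmin ^ 2 * derivWithin (derivWithin u (Set.Icc t0 t1)) (Set.Icc t0 t1) t
            + xmin ^ 3 * derivWithin (derivWithin (derivWithin u (Set.Icc t0 t1))
                (Set.Icc t0 t1)) (Set.Icc t0 t1) t)
          (Set.Icc t0 t1) t) := by
  obtain ⟨Φ, hΦc, hΦ⟩ := exists_continuous_eq_comp_sub ht.le hx.le hC.continuousOn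
    fun t htm x hxm t' htm' x' hxm' => transport_eq_of_sub_eq ht hx
      (hC.differentiableOn (by norm_num)) hPDE ⟨htm, hxm⟩ ⟨htm', hxm'⟩
  set I := Icc t0 t1
  set M := shiftMoment Φ xmin xmax
  have hy : ∀ t ∈ I, ∫ x in xmin..xmax, x ^ 3 * ψ t x = M 3 t := fun t htm =>
    integral_congr fun x hxm => by
      simp only [hΦ t htm x (by rwa [uIcc_of_le hx.le] at hxm)]
  have hM : ∀ n, ∀ t ∈ I, HasDerivWithinAt (M n) (xmin ^ n * u t + n * M (n - 1) t) I t := by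
    intro n t htm
    have h := (hasDerivAt_shiftMoment xmin xmax hΦc n t).hasDerivWithinAt (s := I)
    rwa [← hΦ t htm xmin ⟨le_rfl, hx.le⟩, ← hΦ t htm xmax ⟨hx.le, le_rfl⟩, hbmin t htm,
      hbmax t htm, mul_zero, sub_zero] at h
  have hu1 := hu.derivWithin (uniqueDiffOn_Icc ht) (m := 2) (by norm_num)
  have hu2 := hu1.derivWithin (uniqueDiffOn_Icc ht) (m := 1) (by norm_num)
  have hd0 := fun t htm => (hu.differentiableOn (by norm_num) t htm).hasDerivWithinAt
  have hd1 := fun t htm => (hu1.differentiableOn (by norm_num) t htm).hasDerivWithinAt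
  have hd2 := fun t htm => (hu2.differentiableOn (by norm_num) t htm).hasDerivWithinAt
  refine ⟨fun t => xmin ^ 3 * u t + 3 * M 2 t,
    fun t => xmin ^ 3 * derivWithin u I t + 3 * xmin ^ 2 * u t + 6 * M 1 t,
    fun t => xmin ^ 3 * derivWithin (derivWithin u I) I t + 3 * xmin ^ 2 * derivWithin u I t
      + 6 * xmin * u t + 6 * M 0 t, fun t htm => ?_, fun t htm => ?_, fun t htm => ?_,
    fun t htm => ?_⟩
  · exact ((hM 3 t htm).congr hy (hy t htm)).congr_deriv (by norm_num)
  · exact (((hd0 t htm).const_mul _).add ((hM 2 t htm).const_mul 3)).congr_deriv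
      (by norm_num; ring)
  · exact ((((hd1 t htm).const_mul _).add ((hd0 t htm).const_mul _)).add
      ((hM 1 t htm).const_mul 6)).congr_deriv (by norm_num; ring)
  · exact (((((hd2 t htm).const_mul _).add ((hd1 t htm).const_mul _)).add
      ((hd0 t htm).const_mul _)).add ((hM 0 t htm).const_mul 6)).congr_deriv (by norm_num; ring)

/-- Fourth derivative identity for the third-moment output of the unit-speed transport
equation `∂ₜψ + ∂ₓψ = 0` with `ψ(t, xmax) = 0`:
`y''''(t) = 6 u(t) + 6 xmin u'(t) + 3 xmin² u''(t) + xmin³ u'''(t)`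
where `u(t) = ψ(t, xmin)`. -/
theorem stmt8 (t0 t1 xmin xmax : ℝ) (ht : t0 < t1) (hx0 : 0 ≤ xmin) (hx : xmin < xmax)
    (ψ : ℝ → ℝ → ℝ) (u : ℝ → ℝ)
    (hC : ContDiffOn ℝ 4 (fun p : ℝ × ℝ => ψ p.1 p.2) (Set.Icc t0 t1 ×ˢ Set.Icc xmin xmax))
    (hu : ContDiffOn ℝ 3 u (Set.Icc t0 t1))
    (hPDE : ∀ t ∈ Set.Icc t0 t1, ∀ x ∈ Set.Icc xmin xmax,
      derivWithin (fun s => ψ s x) (Set.Icc t0 t1) t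
        + derivWithin (fun ξ => ψ t ξ) (Set.Icc xmin xmax) x = 0)
    (hbmin : ∀ t ∈ Set.Icc t0 t1, ψ t xmin = u t)
    (hbmax : ∀ t ∈ Set.Icc t0 t1, ψ t xmax = 0) :
    ∃ y1 y2 y3 : ℝ → ℝ,
      (∀ t ∈ Set.Icc t0 t1,
        HasDerivWithinAt (fun s => ∫ x in xmin..xmax, x ^ 3 * ψ s x) (y1 t)
          (Set.Icc t0 t1) t) ∧
      (∀ t ∈ Set.Icc t0 t1, HasDerivWithinAt y1 (y2 t) (Set.Icc t0 t1) t) ∧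
      (∀ t ∈ Set.Icc t0 t1, HasDerivWithinAt y2 (y3 t) (Set.Icc t0 t1) t) ∧
      (∀ t ∈ Set.Icc t0 t1,
        HasDerivWithinAt y3
          (6 * u t + 6 * xmin * derivWithin u (Set.Icc t0 t1) t
            + 3 * xmin ^ 2 * derivWithin (derivWithin u (Set.Icc t0 t1)) (Set.Icc t0 t1) t
            + xmin ^ 3 * derivWithin (derivWithin (derivWithin u (Set.Icc t0 t1))
                (Set.Icc t0 t1)) (Set.Icc t0 t1) t)
          (Set.Icc t0 t1) t) :=
  stmt8_general t0 t1 xmin xmax ht hx ψ u hC hu hPDE hbmin hbmax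
end

section
/- Fix real numbers t0 < τ and 0 < x_min < x_max. For i = 1, 2, let ψ_i : [t0,τ] × [x_min,x_max] → ℝ be C⁴ and satisfy ∂_t ψ_i(t,x) + ∂_x ψ_i(t,x) = 0 for all (t,x), with zero initial datum ψ_i(t0, x) = 0 for all x ∈ [x_min,x_max], boundary datum ψ_i(t, x_min) = u_i(t) with u_i ∈ C³([t0,τ]), and ψ_i(t, x_max) = 0 for all t ∈ [t0,τ]. If the third-moment outputs agree, i.e., ∫_{x_min}^{x_max} x³ ψ_1(t,x) dx = ∫_{x_min}^{x_max} x³ ψ_2(t,x) dx for all t ∈ [t0,τ], then u_1 = u_2 on [t0,τ]. -/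
/-!
Let `ψ` be the difference of the two solutions and `M k t = ∫ x in xmin..xmax, x ^ k * ψ t x`.
Differentiating under the integral, using `∂ₜψ = -∂ₓψ` and integrating by parts (with
`ψ t xmax = 0`) gives `M k' = xmin ^ k * ψ t xmin + k * M (k - 1)`. If `M 3 ≡ 0`, then
`xmin ^ 3 * ψ t xmin = -3 * M 2`; substituting this into the equations for `M 0`, `M 1`, `M 2`
yields a closed linear ODE system with zero initial values, so `M 2 ≡ 0` and hence
`ψ t xmin = 0`.
-/

open Set Function MeasureTheory intervalIntegral

theorem hasDerivWithinAt_intervalIntegral_of_continuousOn_s9 {ψ P : ℝ → ℝ → ℝ} {t0 τ a b t : ℝ}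
    (hab : a ≤ b) (hψ : ContinuousOn (uncurry ψ) (Icc t0 τ ×ˢ Icc a b))
    (hP : ContinuousOn (uncurry P) (Icc t0 τ ×ˢ Icc a b))
    (hψP : ∀ s ∈ Icc t0 τ, ∀ x ∈ Icc a b, HasDerivWithinAt (ψ · x) (P s x) (Icc t0 τ) s)
    (ht : t ∈ Icc t0 τ) :
    HasDerivWithinAt (fun s => ∫ x in a..b, ψ s x) (∫ x in a..b, P t x) (Icc t0 τ) t := by
  have hτ : t0 ≤ τ := ht.1.trans ht.2
  -- extend `P` continuously to the plane, so that its parametric integrals are continuous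
  set P' : ℝ → ℝ → ℝ := fun s x => P (projIcc t0 τ hτ s) (projIcc a b hab x)
  have hP' : Continuous (uncurry P') :=
    hP.comp_continuous (by fun_prop : Continuous fun p : ℝ × ℝ =>
      ((projIcc t0 τ hτ p.1 : ℝ), (projIcc a b hab p.2 : ℝ)))
      fun p => mk_mem_prod (Subtype.prop _) (Subtype.prop _)
  have hP'P : ∀ s ∈ Icc t0 τ, ∀ x ∈ Icc a b, P' s x = P s x := by
    intro s hs x hx
    simp [P', projIcc_of_mem _ hs, projIcc_of_mem _ hx]
  have hslice : ∀ s ∈ Icc t0 τ, IntervalIntegrable (ψ s) volume a b := fun s hs =>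
    (hψ.uncurry_left s hs).intervalIntegrable_of_Icc hab
  have hftc : ∀ s ∈ Icc t0 τ, ∀ x ∈ Icc a b, ψ s x - ψ t0 x = ∫ r in t0..s, P' r x := by
    intro s hs x hx
    have hsub : Icc t0 s ⊆ Icc t0 τ := Icc_subset_Icc_right hs.2
    refine (integral_eq_sub_of_hasDerivAt_of_le (f := (ψ · x)) hs.1 ?_ (fun r hr => ?_)
      ((hP'.uncurry_right x).intervalIntegrable _ _)).symm
    · exact fun r hr => (hψP r (hsub hr) x hx).continuousWithinAt.mono hsub
    · rw [hP'P r (hsub (Ioo_subset_Icc_self hr)) x hx]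
      exact (hψP r (hsub (Ioo_subset_Icc_self hr)) x hx).hasDerivAt
        (Icc_mem_nhds hr.1 (hr.2.trans_le hs.2))
  have hrep : ∀ s ∈ Icc t0 τ, ∫ x in a..b, ψ s x
      = (∫ x in a..b, ψ t0 x) + ∫ r in t0..s, ∫ x in a..b, P' r x := by
    intro s hs
    have hdiff : (∫ x in a..b, ψ s x) - ∫ x in a..b, ψ t0 x
        = ∫ x in a..b, ∫ r in t0..s, P' r x := by
      rw [← integral_sub (hslice s hs) (hslice t0 (left_mem_Icc.2 hτ))]
      refine integral_congr fun x hx => hftc s hs x ?_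
      rwa [uIcc_of_le hab] at hx
    rw [← intervalIntegral_intervalIntegral_swap, ← hdiff]
    · ring
    · exact (hP'.comp continuous_swap).continuousOn.integrableOn_compact
        (isCompact_uIcc.prod isCompact_uIcc) |>.mono_set
        (prod_mono uIoc_subset_uIcc uIoc_subset_uIcc)
  have hG := (continuous_parametric_intervalIntegral_of_continuous' (μ := volume) hP' a b)
    |>.integral_hasStrictDerivAt t0 t
  have hPt : ∫ x in a..b, P' t x = ∫ x in a..b, P t x := by
    refine integral_congr fun x hx => hP'P t ht x ?_
    rwa [uIcc_of_le hab] at hx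
  rw [← hPt]
  exact (hG.hasDerivAt.hasDerivWithinAt.const_add _).congr (fun s hs => hrep s hs) (hrep t ht)

theorem eqOn_zero_of_hasDerivWithinAt_clm {E : Type*} [NormedAddCommGroup E] [NormedSpace ℝ E]
    (A : E →L[ℝ] E) {y : ℝ → E} {a b : ℝ}
    (hy : ∀ t ∈ Icc a b, HasDerivWithinAt y (A (y t)) (Icc a b) t) (hy₀ : y a = 0) :
    EqOn y 0 (Icc a b) := by
  refine ODE_solution_unique (v := fun _ => A) (g := fun _ => 0) (fun _ => A.lipschitz)
    (fun t ht => (hy t ht).continuousWithinAt) (fun t ht => ?_) continuousOn_const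
    (fun t _ => by simpa using hasDerivWithinAt_const t _ (0 : E)) hy₀
  exact (hy t (Ico_subset_Icc_self ht)).mono_of_mem_nhdsWithin
    (Filter.mem_of_superset (Icc_mem_nhdsGE ht.2) (Icc_subset_Icc_left ht.1))

section TwoVariables

variable {ψ : ℝ → ℝ → ℝ} {s s' : Set ℝ} {t x : ℝ}

theorem DifferentiableOn.hasDerivWithinAt_uncurry_left_s9
    (hψ : DifferentiableOn ℝ (uncurry ψ) (s ×ˢ s')) (ht : t ∈ s) (hx : x ∈ s') :
    HasDerivWithinAt (fun ξ => ψ t ξ) (fderivWithin ℝ (uncurry ψ) (s ×ˢ s') (t, x) (0, 1)) s' x :=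
  (hψ (t, x) (mk_mem_prod ht hx)).hasFDerivWithinAt.comp_hasDerivWithinAt x
    ((hasDerivAt_const x t).prodMk (hasDerivAt_id' x)).hasDerivWithinAt
    fun _ hξ => mk_mem_prod ht hξ

theorem DifferentiableOn.hasDerivWithinAt_uncurry_right_s9
    (hψ : DifferentiableOn ℝ (uncurry ψ) (s ×ˢ s')) (ht : t ∈ s) (hx : x ∈ s') :
    HasDerivWithinAt (fun r => ψ r x) (fderivWithin ℝ (uncurry ψ) (s ×ˢ s') (t, x) (1, 0)) s t := by
  have h := (hψ (t, x) (mk_mem_prod ht hx)).hasFDerivWithinAt.comp_hasDerivWithinAt t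
    ((hasDerivAt_id' t).prodMk (hasDerivAt_const t x)).hasDerivWithinAt
    fun _ hr => mk_mem_prod hr hx
  exact h

end TwoVariables

noncomputable def sizeMoment (ψ : ℝ → ℝ → ℝ) (a b : ℝ) (k : ℕ) (t : ℝ) : ℝ :=
  ∫ x in a..b, x ^ k * ψ t x

theorem sizeMoment_sub {ψ₁ ψ₂ : ℝ → ℝ → ℝ} {a b t : ℝ} (hab : a ≤ b)
    (h₁ : ContinuousOn (ψ₁ t) (Icc a b)) (h₂ : ContinuousOn (ψ₂ t) (Icc a b)) (k : ℕ) :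
    sizeMoment (fun t x => ψ₁ t x - ψ₂ t x) a b k t
      = sizeMoment ψ₁ a b k t - sizeMoment ψ₂ a b k t := by
  simp only [sizeMoment, mul_sub]
  exact integral_sub (((continuousOn_pow k).mul h₁).intervalIntegrable_of_Icc hab)
    (((continuousOn_pow k).mul h₂).intervalIntegrable_of_Icc hab)

/-- `ψ` is a classical solution of `∂ₜψ + ∂ₓψ = 0` on `[t0, τ] × [a, b]` and `ψx` is its
continuous spatial derivative. -/
structure IsTransportSolution (t0 τ a b : ℝ) (ψ ψx : ℝ → ℝ → ℝ) : Prop where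
  continuousOn : ContinuousOn (uncurry ψ) (Icc t0 τ ×ˢ Icc a b)
  continuousOn_deriv : ContinuousOn (uncurry ψx) (Icc t0 τ ×ˢ Icc a b)
  hasDerivWithinAt_space : ∀ t ∈ Icc t0 τ, ∀ x ∈ Icc a b,
    HasDerivWithinAt (fun ξ => ψ t ξ) (ψx t x) (Icc a b) x
  hasDerivWithinAt_time : ∀ t ∈ Icc t0 τ, ∀ x ∈ Icc a b,
    HasDerivWithinAt (fun r => ψ r x) (-ψx t x) (Icc t0 τ) t

theorem isTransportSolution_of_contDiffOn {t0 τ a b : ℝ} {ψ : ℝ → ℝ → ℝ} (ht : t0 < τ)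
    (hab : a < b) (hψ : ContDiffOn ℝ 1 (uncurry ψ) (Icc t0 τ ×ˢ Icc a b))
    (hPDE : ∀ t ∈ Icc t0 τ, ∀ x ∈ Icc a b,
      derivWithin (fun r => ψ r x) (Icc t0 τ) t + derivWithin (fun ξ => ψ t ξ) (Icc a b) x = 0) :
    IsTransportSolution t0 τ a b ψ fun t x => derivWithin (fun ξ => ψ t ξ) (Icc a b) x := by
  have hd := hψ.differentiableOn one_ne_zero
  have hx_eq : ∀ t ∈ Icc t0 τ, ∀ x ∈ Icc a b, derivWithin (fun ξ => ψ t ξ) (Icc a b) x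
      = fderivWithin ℝ (uncurry ψ) (Icc t0 τ ×ˢ Icc a b) (t, x) (0, 1) := fun t ht x hx =>
    (hd.hasDerivWithinAt_uncurry_left_s9 ht hx).derivWithin (uniqueDiffOn_Icc hab x hx)
  refine ⟨hψ.continuousOn, ?_, fun t ht x hx => ?_, fun t ht x hx => ?_⟩
  · have hu := (uniqueDiffOn_Icc ht).prod (uniqueDiffOn_Icc hab)
    exact ((hψ.continuousOn_fderivWithin hu le_rfl).clm_apply continuousOn_const).congr
      fun p hp => hx_eq p.1 hp.1 p.2 hp.2
  · exact (hd.hasDerivWithinAt_uncurry_left_s9 ht hx).congr_deriv (hx_eq t ht x hx).symm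
  · exact (hd.hasDerivWithinAt_uncurry_right_s9 ht hx).differentiableWithinAt.hasDerivWithinAt
      |>.congr_deriv (eq_neg_of_add_eq_zero_left (hPDE t ht x hx))

namespace IsTransportSolution

variable {t0 τ a b : ℝ} {ψ ψx ψ₁ ψx₁ ψ₂ ψx₂ : ℝ → ℝ → ℝ}

theorem sub (h₁ : IsTransportSolution t0 τ a b ψ₁ ψx₁) (h₂ : IsTransportSolution t0 τ a b ψ₂ ψx₂) :
    IsTransportSolution t0 τ a b (fun t x => ψ₁ t x - ψ₂ t x) (fun t x => ψx₁ t x - ψx₂ t x) where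
  continuousOn := h₁.continuousOn.sub h₂.continuousOn
  continuousOn_deriv := h₁.continuousOn_deriv.sub h₂.continuousOn_deriv
  hasDerivWithinAt_space t ht x hx :=
    (h₁.hasDerivWithinAt_space t ht x hx).sub (h₂.hasDerivWithinAt_space t ht x hx)
  hasDerivWithinAt_time t ht x hx :=
    ((h₁.hasDerivWithinAt_time t ht x hx).sub (h₂.hasDerivWithinAt_time t ht x hx)).congr_deriv
      (by ring)

theorem hasDerivWithinAt_sizeMoment (h : IsTransportSolution t0 τ a b ψ ψx) (hab : a ≤ b)
    (hb : ∀ t ∈ Icc t0 τ, ψ t b = 0) (k : ℕ) {t : ℝ} (ht : t ∈ Icc t0 τ) :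
    HasDerivWithinAt (sizeMoment ψ a b k) (a ^ k * ψ t a + k * sizeMoment ψ a b (k - 1) t)
      (Icc t0 τ) t := by
  have hpow : ContinuousOn (fun p : ℝ × ℝ => p.2 ^ k) (Icc t0 τ ×ˢ Icc a b) := by fun_prop
  have hd := hasDerivWithinAt_intervalIntegral_of_continuousOn_s9 (ψ := fun s x => x ^ k * ψ s x)
    (P := fun s x => x ^ k * -ψx s x) hab (hpow.mul h.continuousOn)
    (hpow.mul h.continuousOn_deriv.neg)
    (fun s hs x hx => (h.hasDerivWithinAt_time s hs x hx).const_mul (x ^ k)) ht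
  refine hd.congr_deriv ?_
  have hibp := integral_mul_deriv_eq_deriv_mul_of_hasDerivWithinAt (u := (· ^ k))
    (u' := fun x => k * x ^ (k - 1)) (v := ψ t) (v' := ψx t)
    (fun x _ => (hasDerivAt_pow k x).hasDerivWithinAt)
    (fun x hx => by
      rw [uIcc_of_le hab] at hx ⊢
      exact h.hasDerivWithinAt_space t ht x hx)
    ((continuous_const.mul (continuous_pow _)).intervalIntegrable _ _)
    ((h.continuousOn_deriv.uncurry_left t ht).intervalIntegrable_of_Icc hab)
  simp only [mul_neg, intervalIntegral.integral_neg, hibp, hb t ht, mul_zero, zero_sub, mul_assoc,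
    intervalIntegral.integral_const_mul, sizeMoment]
  ring

theorem eq_zero_of_sizeMoment_three_eq_zero (h : IsTransportSolution t0 τ a b ψ ψx)
    (ht : t0 < τ) (ha : a ≠ 0) (hab : a ≤ b) (hinit : ∀ x ∈ Icc a b, ψ t0 x = 0)
    (hb : ∀ t ∈ Icc t0 τ, ψ t b = 0) (hy : ∀ t ∈ Icc t0 τ, sizeMoment ψ a b 3 t = 0) :
    ∀ t ∈ Icc t0 τ, ψ t a = 0 := by
  set M := sizeMoment ψ a b
  have hM := fun k t (hts : t ∈ Icc t0 τ) => h.hasDerivWithinAt_sizeMoment hab hb k hts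
  have hM₀ : ∀ k, M k t0 = 0 := fun k =>
    (integral_congr fun x hx => by simp [hinit x (uIcc_of_le hab ▸ hx)]).trans integral_zero
  set c := -3 / a ^ 3
  have hbdry : ∀ t ∈ Icc t0 τ, ψ t a = c * M 2 t := by
    intro t ht'
    have h0 : HasDerivWithinAt (M 3) 0 (Icc t0 τ) t :=
      (hasDerivWithinAt_const t _ 0).congr hy (hy t ht')
    have h3 := (uniqueDiffOn_Icc ht t ht').eq_deriv _ (hM 3 t ht') h0
    simp only [c]
    field_simp
    norm_num at h3
    linarith
  -- with `ψ t a = c * M 2 t`, the moments `M 0, M 1, M 2` solve a closed linear system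
  let π₀ := ContinuousLinearMap.fst ℝ ℝ (ℝ × ℝ)
  let π₁ := (ContinuousLinearMap.fst ℝ ℝ ℝ).comp (ContinuousLinearMap.snd ℝ ℝ (ℝ × ℝ))
  let π₂ := (ContinuousLinearMap.snd ℝ ℝ ℝ).comp (ContinuousLinearMap.snd ℝ ℝ (ℝ × ℝ))
  let A := (c • π₂).prod ((π₀ + (a * c) • π₂).prod ((2 : ℝ) • π₁ + (a ^ 2 * c) • π₂))
  have hsys := eqOn_zero_of_hasDerivWithinAt_clm A (y := fun t => (M 0 t, M 1 t, M 2 t))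
    (fun t ht' => ((hM 0 t ht').prodMk ((hM 1 t ht').prodMk (hM 2 t ht'))).congr_deriv (by
      simp [A, π₀, π₁, π₂, hbdry t ht', M]
      constructor <;> ring))
    (by simp only [hM₀]; rfl)
  intro t ht'
  have hM₂ : M 2 t = 0 := congrArg (fun p : ℝ × ℝ × ℝ => p.2.2) (hsys ht')
  rw [hbdry t ht', hM₂, mul_zero]

end IsTransportSolution

theorem stmt9_general (t0 τ xmin xmax : ℝ) (ht : t0 < τ) (hx0 : 0 < xmin) (hx : xmin < xmax)
    (ψ1 ψ2 : ℝ → ℝ → ℝ) (u1 u2 : ℝ → ℝ)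
    (hC1 : ContDiffOn ℝ 4 (fun p : ℝ × ℝ => ψ1 p.1 p.2) (Set.Icc t0 τ ×ˢ Set.Icc xmin xmax))
    (hC2 : ContDiffOn ℝ 4 (fun p : ℝ × ℝ => ψ2 p.1 p.2) (Set.Icc t0 τ ×ˢ Set.Icc xmin xmax))
    (hPDE1 : ∀ t ∈ Set.Icc t0 τ, ∀ x ∈ Set.Icc xmin xmax,
      derivWithin (fun s => ψ1 s x) (Set.Icc t0 τ) t
        + derivWithin (fun ξ => ψ1 t ξ) (Set.Icc xmin xmax) x = 0)
    (hPDE2 : ∀ t ∈ Set.Icc t0 τ, ∀ x ∈ Set.Icc xmin xmax,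
      derivWithin (fun s => ψ2 s x) (Set.Icc t0 τ) t
        + derivWithin (fun ξ => ψ2 t ξ) (Set.Icc xmin xmax) x = 0)
    (hinit1 : ∀ x ∈ Set.Icc xmin xmax, ψ1 t0 x = 0)
    (hinit2 : ∀ x ∈ Set.Icc xmin xmax, ψ2 t0 x = 0)
    (hbmin1 : ∀ t ∈ Set.Icc t0 τ, ψ1 t xmin = u1 t)
    (hbmin2 : ∀ t ∈ Set.Icc t0 τ, ψ2 t xmin = u2 t)
    (hbmax1 : ∀ t ∈ Set.Icc t0 τ, ψ1 t xmax = 0)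
    (hbmax2 : ∀ t ∈ Set.Icc t0 τ, ψ2 t xmax = 0)
    (hout : ∀ t ∈ Set.Icc t0 τ,
      (∫ x in xmin..xmax, x ^ 3 * ψ1 t x) = ∫ x in xmin..xmax, x ^ 3 * ψ2 t x) :
    ∀ t ∈ Set.Icc t0 τ, u1 t = u2 t := by
  have h₁ := isTransportSolution_of_contDiffOn ht hx (hC1.of_le (by norm_num)) hPDE1
  have h₂ := isTransportSolution_of_contDiffOn ht hx (hC2.of_le (by norm_num)) hPDE2
  have hzero := (h₁.sub h₂).eq_zero_of_sizeMoment_three_eq_zero ht hx0.ne' hx.le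
    (fun x hx' => by simp [hinit1 x hx', hinit2 x hx'])
    (fun t ht' => by simp [hbmax1 t ht', hbmax2 t ht'])
    (fun t ht' => by
      rw [sizeMoment_sub hx.le (h₁.continuousOn.uncurry_left t ht')
        (h₂.continuousOn.uncurry_left t ht')]
      exact sub_eq_zero.2 (hout t ht'))
  intro t ht'
  rw [← hbmin1 t ht', ← hbmin2 t ht']
  exact sub_eq_zero.1 (hzero t ht')

/-- Observability of the nucleation boundary datum: for the unit-speed transport equation
`∂ₜψ + ∂ₓψ = 0` on `[t0,τ] × [xmin,xmax]` with `xmin > 0`, zero initial datum and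
`ψ(t, xmax) = 0`, the third-moment output determines the boundary datum `u` uniquely. -/
theorem stmt9 (t0 τ xmin xmax : ℝ) (ht : t0 < τ) (hx0 : 0 < xmin) (hx : xmin < xmax)
    (ψ1 ψ2 : ℝ → ℝ → ℝ) (u1 u2 : ℝ → ℝ)
    (hC1 : ContDiffOn ℝ 4 (fun p : ℝ × ℝ => ψ1 p.1 p.2) (Set.Icc t0 τ ×ˢ Set.Icc xmin xmax))
    (hC2 : ContDiffOn ℝ 4 (fun p : ℝ × ℝ => ψ2 p.1 p.2) (Set.Icc t0 τ ×ˢ Set.Icc xmin xmax))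
    (hu1 : ContDiffOn ℝ 3 u1 (Set.Icc t0 τ))
    (hu2 : ContDiffOn ℝ 3 u2 (Set.Icc t0 τ))
    (hPDE1 : ∀ t ∈ Set.Icc t0 τ, ∀ x ∈ Set.Icc xmin xmax,
      derivWithin (fun s => ψ1 s x) (Set.Icc t0 τ) t
        + derivWithin (fun ξ => ψ1 t ξ) (Set.Icc xmin xmax) x = 0)
    (hPDE2 : ∀ t ∈ Set.Icc t0 τ, ∀ x ∈ Set.Icc xmin xmax,
      derivWithin (fun s => ψ2 s x) (Set.Icc t0 τ) t
        + derivWithin (fun ξ => ψ2 t ξ) (Set.Icc xmin xmax) x = 0)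
    (hinit1 : ∀ x ∈ Set.Icc xmin xmax, ψ1 t0 x = 0)
    (hinit2 : ∀ x ∈ Set.Icc xmin xmax, ψ2 t0 x = 0)
    (hbmin1 : ∀ t ∈ Set.Icc t0 τ, ψ1 t xmin = u1 t)
    (hbmin2 : ∀ t ∈ Set.Icc t0 τ, ψ2 t xmin = u2 t)
    (hbmax1 : ∀ t ∈ Set.Icc t0 τ, ψ1 t xmax = 0)
    (hbmax2 : ∀ t ∈ Set.Icc t0 τ, ψ2 t xmax = 0)
    (hout : ∀ t ∈ Set.Icc t0 τ,
      (∫ x in xmin..xmax, x ^ 3 * ψ1 t x) = ∫ x in xmin..xmax, x ^ 3 * ψ2 t x) :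
    ∀ t ∈ Set.Icc t0 τ, u1 t = u2 t :=
  stmt9_general t0 τ xmin xmax ht hx0 hx ψ1 ψ2 u1 u2 hC1 hC2 hPDE1 hPDE2 hinit1 hinit2 hbmin1 hbmin2
    hbmax1 hbmax2 hout
end

section
/- Fix real numbers t0 < t1 and 0 ≤ x_min < x_max. Let ψ : [t0,t1] × [x_min,x_max] → ℝ be C⁴ and satisfy ∂_t ψ(t,x) + ∂_x ψ(t,x) = 0 for all (t,x), with boundary values ψ(t, x_min) = 0 and ψ(t, x_max) = 0 for all t ∈ [t0,t1]. Then the third-moment output y(t) = ∫_{x_min}^{x_max} x³ ψ(t,x) dx satisfies y⁗(t) = 0 for all t ∈ [t0,t1]; equivalently, y coincides on [t0,t1] with a polynomial of degree at most 3. -/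
set_option autoImplicit false

/-!
The transport equation makes `ψ` constant along the characteristics `x - t = const`, so `ψ t`
is the initial profile `ψ t0` translated by `s = t - t0`, with zeros entering through `xmin`.
The zero condition at `xmax` propagates back along characteristics: `ψ t0` vanishes on
`[xmax - (t1 - t0), xmax]`, so no mass leaves the window before `t1`, and the change of variables
`x = u + s` gives `y t = ∫ (u + s)³ ψ t0 u du`, a cubic polynomial in `s`.
-/

open MeasureTheory Set Function Polynomial

theorem HasFDerivWithinAt.derivWithin_add_derivWithin_eq
    {E : Type*} [NormedAddCommGroup E] [NormedSpace ℝ E]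
    {F : ℝ × ℝ → E} {L : ℝ × ℝ →L[ℝ] E} {s t : Set ℝ} {a b : ℝ}
    (hF : HasFDerivWithinAt F L (s ×ˢ t) (a, b)) (ha : a ∈ s) (hb : b ∈ t)
    (hs : UniqueDiffWithinAt ℝ s a) (ht : UniqueDiffWithinAt ℝ t b) :
    derivWithin (fun u => F (u, b)) s a + derivWithin (fun v => F (a, v)) t b = L (1, 1) := by
  have h₁ : HasDerivWithinAt (fun u => F (u, b)) (L (1, 0)) s a :=
    hF.comp_hasDerivWithinAt a ((hasDerivAt_id a).prodMk (hasDerivAt_const a b)).hasDerivWithinAt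
      fun u hu => mk_mem_prod hu hb
  have h₂ : HasDerivWithinAt (fun v => F (a, v)) (L (0, 1)) t b :=
    hF.comp_hasDerivWithinAt b ((hasDerivAt_const b a).prodMk (hasDerivAt_id b)).hasDerivWithinAt
      fun v hv => mk_mem_prod ha hv
  rw [h₁.derivWithin hs, h₂.derivWithin ht, ← map_add, Prod.mk_add_mk, add_zero, zero_add]

theorem Convex.apply_add_smul_eq_of_fderivWithin_apply_eq_zero
    {E G : Type*} [NormedAddCommGroup E] [NormedSpace ℝ E] [NormedAddCommGroup G]
    [NormedSpace ℝ G] {f : E → G} {K : Set E} (hK : Convex ℝ K)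
    (hf : DifferentiableOn ℝ f K)
    {v : E} (hv : ∀ p ∈ K, fderivWithin ℝ f K p v = 0) {p : E} {d : ℝ} (hp : p ∈ K)
    (hq : p + d • v ∈ K) : f (p + d • v) = f p := by
  have hγK : ∀ s ∈ Icc (0 : ℝ) 1, p + (s * d) • v ∈ K := fun s hs => by
    convert hK.add_smul_mem hp hq hs using 1
    rw [mul_smul]
  have hderiv : ∀ s ∈ Icc (0 : ℝ) 1,
      HasDerivWithinAt (fun s => f (p + (s * d) • v)) 0 (Icc 0 1) s := fun s hs => by
    have hγ : HasDerivWithinAt (fun s : ℝ => p + (s * d) • v) (d • v) (Icc 0 1) s := by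
      simpa using (((hasDerivAt_mul_const d).smul_const v).const_add p).hasDerivWithinAt
    have := (hf _ (hγK s hs)).hasFDerivWithinAt.comp_hasDerivWithinAt s hγ hγK
    rwa [map_smul, hv _ (hγK s hs), smul_zero] at this
  have := norm_image_sub_le_of_norm_hasDerivWithin_le hderiv (fun _ _ => norm_zero.le)
    (convex_Icc 0 1) (left_mem_Icc.2 zero_le_one) (right_mem_Icc.2 zero_le_one)
  simpa [sub_eq_zero] using this

namespace intervalIntegral

theorem integral_comp_sub_right_of_support_subset
    {E : Type*} [NormedAddCommGroup E] [NormedSpace ℝ E] {g : ℝ → E} {a b s : ℝ}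
    (h₁ : support g ⊆ Ioc a b) (h₂ : support g ⊆ Ioc (a - s) (b - s)) :
    ∫ x in a..b, g (x - s) = ∫ x in a..b, g x := by
  rw [integral_comp_sub_right, integral_eq_integral_of_support_subset h₂,
    integral_eq_integral_of_support_subset h₁]

theorem exists_natDegree_le_eval_eq_integral_add_pow_mul {f : ℝ → ℝ} {a b : ℝ}
    (hf : IntervalIntegrable f volume a b) (n : ℕ) :
    ∃ p : ℝ[X], p.natDegree ≤ n ∧ ∀ s, ∫ u in a..b, (u + s) ^ n * f u = p.eval s := by
  refine ⟨∑ k ∈ Finset.range (n + 1),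
    C ((∫ u in a..b, u ^ k * f u) * n.choose k) * X ^ (n - k), ?_, fun s => ?_⟩
  · refine natDegree_sum_le_of_forall_le _ _ fun k _ => (natDegree_C_mul_le _ _).trans ?_
    simp
  · have hI : ∀ k, IntervalIntegrable (fun u => u ^ k * f u) volume a b := fun k =>
      hf.continuousOn_mul (continuous_pow k).continuousOn
    have hexpand : ∀ u, (u + s) ^ n * f u =
        ∑ k ∈ Finset.range (n + 1), u ^ k * f u * (s ^ (n - k) * n.choose k) := fun u => by
      rw [add_pow, Finset.sum_mul]
      exact Finset.sum_congr rfl fun k _ => by ring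
    simp only [hexpand, eval_finsetSum, eval_mul, eval_C, eval_pow, eval_X]
    rw [integral_finsetSum fun k _ => (hI k).mul_const _]
    exact Finset.sum_congr rfl fun k _ => by rw [integral_mul_const]; ring

end intervalIntegral

theorem exists_hasDerivWithinAt_chain_of_eqOn_eval {y : ℝ → ℝ} {S : Set ℝ} {p : ℝ[X]}
    (hp : p.natDegree ≤ 3) (hy : EqOn y (fun t => p.eval t) S) :
    ∃ y1 y2 y3 : ℝ → ℝ,
      (∀ t ∈ S, HasDerivWithinAt y (y1 t) S t) ∧
      (∀ t ∈ S, HasDerivWithinAt y1 (y2 t) S t) ∧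
      (∀ t ∈ S, HasDerivWithinAt y2 (y3 t) S t) ∧
      (∀ t ∈ S, HasDerivWithinAt y3 0 S t) := by
  refine ⟨fun t => (derivative p).eval t, fun t => (derivative^[2] p).eval t,
    fun t => (derivative^[3] p).eval t,
    fun t ht => ((p.hasDerivAt t).hasDerivWithinAt).congr hy (hy ht),
    fun t _ => ((derivative p).hasDerivAt t).hasDerivWithinAt,
    fun t _ => ((derivative^[2] p).hasDerivAt t).hasDerivWithinAt, fun t _ => ?_⟩
  have h4 : derivative (derivative^[3] p) = 0 := by
    rw [← Function.iterate_succ_apply' derivative]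
    exact iterate_derivative_eq_zero (by omega)
  have h := ((derivative^[3] p).hasDerivAt t).hasDerivWithinAt (s := S)
  rwa [h4, eval_zero] at h

def IsConstOnCharacteristics (ψ : ℝ → ℝ → ℝ) (I J : Set ℝ) : Prop :=
  ∀ t ∈ I, ∀ x ∈ J, ∀ t' ∈ I, ∀ x' ∈ J, t' - t = x' - x → ψ t' x' = ψ t x

theorem isConstOnCharacteristics_of_derivWithin_add_derivWithin_eq_zero
    {t0 t1 xmin xmax : ℝ} (ht : t0 < t1) (hx : xmin < xmax) {ψ : ℝ → ℝ → ℝ}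
    (hψ : DifferentiableOn ℝ (fun p : ℝ × ℝ => ψ p.1 p.2) (Icc t0 t1 ×ˢ Icc xmin xmax))
    (hPDE : ∀ t ∈ Icc t0 t1, ∀ x ∈ Icc xmin xmax,
      derivWithin (fun s => ψ s x) (Icc t0 t1) t
        + derivWithin (fun ξ => ψ t ξ) (Icc xmin xmax) x = 0) :
    IsConstOnCharacteristics ψ (Icc t0 t1) (Icc xmin xmax) := by
  intro t htI x hxJ t' ht'I x' hx'J hd
  have hv : ∀ p ∈ Icc t0 t1 ×ˢ Icc xmin xmax,
      fderivWithin ℝ (fun p : ℝ × ℝ => ψ p.1 p.2) (Icc t0 t1 ×ˢ Icc xmin xmax) p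
        (1, 1) = 0 :=
    fun ⟨s, ξ⟩ ⟨hs, hξ⟩ => by
      rw [← (hψ _ ⟨hs, hξ⟩).hasFDerivWithinAt.derivWithin_add_derivWithin_eq hs hξ
        (uniqueDiffOn_Icc ht s hs) (uniqueDiffOn_Icc hx ξ hξ)]
      exact hPDE s hs ξ hξ
  have hq : (t, x) + (t' - t) • ((1 : ℝ), (1 : ℝ)) = (t', x') := by
    ext <;> simp; linarith
  have hK := (convex_Icc (𝕜 := ℝ) t0 t1).prod (convex_Icc xmin xmax)
  have h := hK.apply_add_smul_eq_of_fderivWithin_apply_eq_zero hψ hv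
    (p := (t, x)) ⟨htI, hxJ⟩ (by rw [hq]; exact ⟨ht'I, hx'J⟩)
  rwa [hq] at h

namespace IsConstOnCharacteristics

variable {t0 t1 xmin xmax : ℝ} {ψ : ℝ → ℝ → ℝ}

theorem eq_indicator_comp_sub (hψ : IsConstOnCharacteristics ψ (Icc t0 t1) (Icc xmin xmax))
    (hmin : ∀ t ∈ Icc t0 t1, ψ t xmin = 0) {t x : ℝ} (ht : t ∈ Icc t0 t1)
    (hx : x ∈ Icc xmin xmax) :
    ψ t x = (Icc xmin xmax).indicator (ψ t0) (x - (t - t0)) := by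
  by_cases hin : xmin ≤ x - (t - t0)
  · have hmem : x - (t - t0) ∈ Icc xmin xmax := ⟨hin, by linarith [hx.2, ht.1]⟩
    rw [indicator_of_mem hmem]
    exact hψ t0 ⟨le_rfl, ht.1.trans ht.2⟩ _ hmem t ht x hx (by ring)
  · have hfoot : t - (x - xmin) ∈ Icc t0 t1 := ⟨by linarith, by linarith [hx.1, ht.2]⟩
    rw [indicator_of_notMem (fun h => hin h.1),
      hψ _ hfoot xmin ⟨le_rfl, hx.1.trans hx.2⟩ t ht x hx (by ring), hmin _ hfoot]

theorem eq_zero_of_le (hψ : IsConstOnCharacteristics ψ (Icc t0 t1) (Icc xmin xmax))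
    (hmax : ∀ t ∈ Icc t0 t1, ψ t xmax = 0) {u : ℝ} (hu : u ∈ Icc xmin xmax)
    (hle : xmax - (t1 - t0) ≤ u) : ψ t0 u = 0 := by
  have hexit : t0 + (xmax - u) ∈ Icc t0 t1 := ⟨by linarith [hu.2], by linarith⟩
  rw [← hψ _ ⟨le_rfl, hexit.1.trans hexit.2⟩ u hu _ hexit xmax ⟨hu.1.trans hu.2, le_rfl⟩
    (by ring), hmax _ hexit]

theorem support_indicator_subset (hψ : IsConstOnCharacteristics ψ (Icc t0 t1) (Icc xmin xmax))
    (hmin : ∀ t ∈ Icc t0 t1, ψ t xmin = 0) (hmax : ∀ t ∈ Icc t0 t1, ψ t xmax = 0)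
    {s : ℝ} (hs : s ∈ Icc 0 (t1 - t0)) :
    support ((Icc xmin xmax).indicator (ψ t0)) ⊆ Ioc xmin (xmax - s) := by
  intro u hu
  have hmem : u ∈ Icc xmin xmax := by
    by_contra h
    exact hu (indicator_of_notMem h _)
  have ht0 : t0 ∈ Icc t0 t1 := ⟨le_rfl, by linarith [hs.1, hs.2]⟩
  rw [mem_support, indicator_of_mem hmem] at hu
  refine ⟨hmem.1.lt_of_ne fun h => hu (h ▸ hmin t0 ht0), le_of_not_gt fun hlt => ?_⟩
  exact hu (hψ.eq_zero_of_le hmax hmem (by linarith [hs.2]))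

theorem integral_mul_eq (hψ : IsConstOnCharacteristics ψ (Icc t0 t1) (Icc xmin xmax))
    (hmin : ∀ t ∈ Icc t0 t1, ψ t xmin = 0) (hmax : ∀ t ∈ Icc t0 t1, ψ t xmax = 0)
    (hx : xmin ≤ xmax) (w : ℝ → ℝ) {t : ℝ} (ht : t ∈ Icc t0 t1) :
    ∫ x in xmin..xmax, w x * ψ t x = ∫ u in xmin..xmax, w (u + (t - t0)) * ψ t0 u := by
  set s := t - t0
  set φ := (Icc xmin xmax).indicator (ψ t0)
  have hsupp : support (fun u => w (u + s) * φ u) ⊆ Ioc xmin (xmax - s) :=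
    (support_mul_subset_right _ _).trans
      (hψ.support_indicator_subset hmin hmax ⟨sub_nonneg.2 ht.1, sub_le_sub_right ht.2 t0⟩)
  calc ∫ x in xmin..xmax, w x * ψ t x
      = ∫ x in xmin..xmax, w (x - s + s) * φ (x - s) :=
        intervalIntegral.integral_congr fun x hx' => by
          rw [uIcc_of_le hx] at hx'
          rw [sub_add_cancel, hψ.eq_indicator_comp_sub hmin ht hx']
    _ = ∫ u in xmin..xmax, w (u + s) * φ u :=
        intervalIntegral.integral_comp_sub_right_of_support_subset
          (hsupp.trans (Ioc_subset_Ioc_right (by linarith [ht.1])))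
          (hsupp.trans (Ioc_subset_Ioc_left (by linarith [ht.1])))
    _ = ∫ u in xmin..xmax, w (u + s) * ψ t0 u :=
        intervalIntegral.integral_congr fun u hu => by
          rw [uIcc_of_le hx] at hu
          rw [show φ u = ψ t0 u from indicator_of_mem hu _]

end IsConstOnCharacteristics

theorem stmt10_general (t0 t1 xmin xmax : ℝ) (ht : t0 < t1) (hx : xmin < xmax)
    (ψ : ℝ → ℝ → ℝ)
    (hC : ContDiffOn ℝ 4 (fun p : ℝ × ℝ => ψ p.1 p.2) (Set.Icc t0 t1 ×ˢ Set.Icc xmin xmax))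
    (hPDE : ∀ t ∈ Set.Icc t0 t1, ∀ x ∈ Set.Icc xmin xmax,
      derivWithin (fun s => ψ s x) (Set.Icc t0 t1) t
        + derivWithin (fun ξ => ψ t ξ) (Set.Icc xmin xmax) x = 0)
    (hbmin : ∀ t ∈ Set.Icc t0 t1, ψ t xmin = 0)
    (hbmax : ∀ t ∈ Set.Icc t0 t1, ψ t xmax = 0) :
    (∃ y1 y2 y3 : ℝ → ℝ,
      (∀ t ∈ Set.Icc t0 t1,
        HasDerivWithinAt (fun s => ∫ x in xmin..xmax, x ^ 3 * ψ s x) (y1 t)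
          (Set.Icc t0 t1) t) ∧
      (∀ t ∈ Set.Icc t0 t1, HasDerivWithinAt y1 (y2 t) (Set.Icc t0 t1) t) ∧
      (∀ t ∈ Set.Icc t0 t1, HasDerivWithinAt y2 (y3 t) (Set.Icc t0 t1) t) ∧
      (∀ t ∈ Set.Icc t0 t1, HasDerivWithinAt y3 0 (Set.Icc t0 t1) t)) ∧
    (∃ p : Polynomial ℝ, p.degree ≤ 3 ∧
      ∀ t ∈ Set.Icc t0 t1, (∫ x in xmin..xmax, x ^ 3 * ψ t x) = p.eval t) := by
  have hchar := isConstOnCharacteristics_of_derivWithin_add_derivWithin_eq_zero ht hx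
    (hC.differentiableOn (by norm_num)) hPDE
  have hψ₀ : ContinuousOn (ψ t0) (Icc xmin xmax) :=
    hC.continuousOn.comp (continuous_const.prodMk continuous_id).continuousOn
      fun _ hξ => mk_mem_prod (left_mem_Icc.2 ht.le) hξ
  obtain ⟨p, hpdeg, hp⟩ := intervalIntegral.exists_natDegree_le_eval_eq_integral_add_pow_mul
    (hψ₀.intervalIntegrable_of_Icc hx.le) 3
  set q := p.comp (X - C t0)
  have hq : EqOn (fun t => ∫ x in xmin..xmax, x ^ 3 * ψ t x) (fun t => q.eval t) (Icc t0 t1) :=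
    fun t ht => by
      simp only [q, hchar.integral_mul_eq hbmin hbmax hx.le (· ^ 3) ht, hp, eval_comp, eval_sub,
        eval_X, eval_C]
  have hqdeg : q.natDegree ≤ 3 := by
    rwa [natDegree_comp, natDegree_X_sub_C, mul_one]
  exact ⟨exists_hasDerivWithinAt_chain_of_eqOn_eval hqdeg hq, q, degree_le_of_natDegree_le hqdeg,
    hq⟩

/-- Non-observability key step: for the unit-speed transport equation `∂ₜψ + ∂ₓψ = 0` with zero
boundary values at both `xmin` and `xmax`, the third-moment output `y(t) = ∫ x³ ψ(t,x) dx`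
has vanishing fourth derivative; equivalently, it coincides with a polynomial
of degree at most 3 on `[t0,t1]`. -/
theorem stmt10 (t0 t1 xmin xmax : ℝ) (ht : t0 < t1) (hx0 : 0 ≤ xmin) (hx : xmin < xmax)
    (ψ : ℝ → ℝ → ℝ)
    (hC : ContDiffOn ℝ 4 (fun p : ℝ × ℝ => ψ p.1 p.2) (Set.Icc t0 t1 ×ˢ Set.Icc xmin xmax))
    (hPDE : ∀ t ∈ Set.Icc t0 t1, ∀ x ∈ Set.Icc xmin xmax,
      derivWithin (fun s => ψ s x) (Set.Icc t0 t1) t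
        + derivWithin (fun ξ => ψ t ξ) (Set.Icc xmin xmax) x = 0)
    (hbmin : ∀ t ∈ Set.Icc t0 t1, ψ t xmin = 0)
    (hbmax : ∀ t ∈ Set.Icc t0 t1, ψ t xmax = 0) :
    (∃ y1 y2 y3 : ℝ → ℝ,
      (∀ t ∈ Set.Icc t0 t1,
        HasDerivWithinAt (fun s => ∫ x in xmin..xmax, x ^ 3 * ψ s x) (y1 t)
          (Set.Icc t0 t1) t) ∧
      (∀ t ∈ Set.Icc t0 t1, HasDerivWithinAt y1 (y2 t) (Set.Icc t0 t1) t) ∧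
      (∀ t ∈ Set.Icc t0 t1, HasDerivWithinAt y2 (y3 t) (Set.Icc t0 t1) t) ∧
      (∀ t ∈ Set.Icc t0 t1, HasDerivWithinAt y3 0 (Set.Icc t0 t1) t)) ∧
    (∃ p : Polynomial ℝ, p.degree ≤ 3 ∧
      ∀ t ∈ Set.Icc t0 t1, (∫ x in xmin..xmax, x ^ 3 * ψ t x) = p.eval t) :=
  stmt10_general t0 t1 xmin xmax ht hx ψ hC hPDE hbmin hbmax
end

section
/- Fix real numbers t0 < t1, 0 ≤ x_min < x_max and x̄ ∈ [x_min, x_max), a continuous G : [t0,t1] → ℝ with G(t) > 0 for all t, and 𝔊(t) = ∫_{t0}^{t} G(s) ds; assume x̄ + 𝔊(t1) ≤ x_max. Let ψ0, φ0 : [x_min, x_max] → ℝ be continuous functions vanishing outside (x_min, x̄), extended by 0 to all of ℝ, and define the transported solutions ψ(t,x) = ψ0(x − 𝔊(t)) and φ(t,x) = φ0(x − 𝔊(t)) on [t0,t1] × [x_min,x_max]. If ∫_{x_min}^{x_max} ξ^k ψ0(ξ) dξ = ∫_{x_min}^{x_max} ξ^k φ0(ξ) dξ for k = 0, 1, 2,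 3, then ∫_{x_min}^{x_max} x³ ψ(t,x) dx = ∫_{x_min}^{x_max} x³ φ(t,x) dx for all t ∈ [t0,t1]. -/
set_option autoImplicit false

lemma trunc_int (xmin xbar a b : ℝ) (ha : a ≤ xmin) (hm : xmin ≤ xbar) (hb : xbar ≤ b)
    (g : ℝ → ℝ) (hg : Continuous g)
    (hsupp : ∀ x, x ∉ Set.Ioo xmin xbar → g x = 0) :
    (∫ x in a..b, g x) = ∫ x in xmin..xbar, g x := by
  have h1 : (∫ x in a..xmin, g x) = 0 := by
    rw [intervalIntegral.integral_congr (g := fun _ => (0:ℝ)), intervalIntegral.integral_zero]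
    intro x hx
    rw [Set.uIcc_of_le ha] at hx
    exact hsupp x (by simp only [Set.mem_Ioo, not_and, not_lt]; intro h; linarith [hx.2])
  have h3 : (∫ x in xbar..b, g x) = 0 := by
    rw [intervalIntegral.integral_congr (g := fun _ => (0:ℝ)), intervalIntegral.integral_zero]
    intro x hx
    rw [Set.uIcc_of_le hb] at hx
    exact hsupp x (by simp only [Set.mem_Ioo, not_and, not_lt]; intro h; linarith [hx.1])
  have i1 : IntervalIntegrable g MeasureTheory.volume a xmin := hg.intervalIntegrable _ _
  have i2 : IntervalIntegrable g MeasureTheory.volume xmin xbar := hg.intervalIntegrable _ _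
  have i3 : IntervalIntegrable g MeasureTheory.volume xbar b := hg.intervalIntegrable _ _
  have e1 : (∫ x in xmin..xbar, g x) + (∫ x in xbar..b, g x) = ∫ x in xmin..b, g x :=
    intervalIntegral.integral_add_adjacent_intervals i2 i3
  have e2 : (∫ x in a..xmin, g x) + (∫ x in xmin..b, g x) = ∫ x in a..b, g x :=
    intervalIntegral.integral_add_adjacent_intervals i1 (i2.trans i3)
  rw [← e2, ← e1, h1, h3]; ring

lemma shift_int (xmin xbar xmax c : ℝ) (hc : 0 ≤ c) (hm : xmin ≤ xbar)
    (hbar : xbar + c ≤ xmax)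
    (f : ℝ → ℝ) (hf : Continuous f)
    (hsupp : ∀ x, x ∉ Set.Ioo xmin xbar → f x = 0) :
    (∫ x in xmin..xmax, x ^ 3 * f (x - c)) = ∫ ξ in xmin..xmax, (ξ + c) ^ 3 * f ξ := by
  have hg : Continuous fun ξ => (ξ + c) ^ 3 * f ξ := by continuity
  have hgsupp : ∀ x, x ∉ Set.Ioo xmin xbar → (x + c) ^ 3 * f x = 0 := by
    intro x hx; rw [hsupp x hx, mul_zero]
  have key := intervalIntegral.integral_comp_sub_right (a := xmin) (b := xmax)
    (fun ξ => (ξ + c) ^ 3 * f ξ) c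
  simp only [sub_add_cancel] at key
  rw [key, trunc_int xmin xbar (xmin - c) (xmax - c) (by linarith) hm (by linarith) _ hg hgsupp,
    trunc_int xmin xbar xmin xmax le_rfl hm (by linarith) _ hg hgsupp]

lemma expand_int (xmin xmax c : ℝ) (f : ℝ → ℝ) (hf : Continuous f) :
    (∫ ξ in xmin..xmax, (ξ + c) ^ 3 * f ξ)
      = (∫ ξ in xmin..xmax, ξ ^ 3 * f ξ) + 3 * c * (∫ ξ in xmin..xmax, ξ ^ 2 * f ξ)
        + 3 * c ^ 2 * (∫ ξ in xmin..xmax, ξ ^ 1 * f ξ)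
        + c ^ 3 * (∫ ξ in xmin..xmax, ξ ^ 0 * f ξ) := by
  have i : ∀ k : ℕ, IntervalIntegrable (fun ξ => ξ ^ k * f ξ) MeasureTheory.volume xmin xmax :=
    fun k => (Continuous.mul (by continuity) hf).intervalIntegrable _ _
  rw [← intervalIntegral.integral_const_mul, ← intervalIntegral.integral_const_mul,
    ← intervalIntegral.integral_const_mul,
    ← intervalIntegral.integral_add (i 3) ((i 2).const_mul _),
    ← intervalIntegral.integral_add ((i 3).add ((i 2).const_mul _))
      ((i 1).const_mul _),
    ← intervalIntegral.integral_add (((i 3).add ((i 2).const_mul _)).add ((i 1).const_mul _))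
      ((i 0).const_mul _)]
  apply intervalIntegral.integral_congr
  intro ξ _; simp; ring

/-- Non-observability of the crystallization model from the third-moment output: two initial
crystal size distributions (supported in `(xmin, x̄)`, transported at speed `G`) whose moments
of order 0 through 3 agree produce the same third-moment output for all time, provided the
transported support stays inside the size window (`x̄ + 𝔊(t1) ≤ xmax`). -/
theorem stmt11 (t0 t1 xmin xmax xbar : ℝ) (ht : t0 < t1) (hx0 : 0 ≤ xmin) (hx : xmin < xmax)
    (hxbar : xbar ∈ Set.Ico xmin xmax)
    (G : ℝ → ℝ) (hGcont : ContinuousOn G (Set.Icc t0 t1))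
    (hGpos : ∀ t ∈ Set.Icc t0 t1, 0 < G t)
    (hsmall : xbar + (∫ s in t0..t1, G s) ≤ xmax)
    (ψ0 φ0 : ℝ → ℝ)
    (hψ0c : Continuous ψ0) (hφ0c : Continuous φ0)
    (hψ0supp : ∀ x : ℝ, x ∉ Set.Ioo xmin xbar → ψ0 x = 0)
    (hφ0supp : ∀ x : ℝ, x ∉ Set.Ioo xmin xbar → φ0 x = 0)
    (hmom : ∀ k : ℕ, k ≤ 3 →
      (∫ ξ in xmin..xmax, ξ ^ k * ψ0 ξ) = ∫ ξ in xmin..xmax, ξ ^ k * φ0 ξ) :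
    ∀ t ∈ Set.Icc t0 t1,
      (∫ x in xmin..xmax, x ^ 3 * ψ0 (x - ∫ s in t0..t, G s))
        = ∫ x in xmin..xmax, x ^ 3 * φ0 (x - ∫ s in t0..t, G s) := by
  intro t htmem
  obtain ⟨ht0, ht1⟩ := htmem
  set c : ℝ := ∫ s in t0..t, G s with hc
  -- integrability of G on subintervals
  have hGint : ∀ a b, a ∈ Set.Icc t0 t1 → b ∈ Set.Icc t0 t1 →
      IntervalIntegrable G MeasureTheory.volume a b := by
    intro a b ha hb
    apply (hGcont.mono ?_).intervalIntegrable
    exact Set.uIcc_subset_Icc ha hb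
  have hc0 : 0 ≤ c := by
    apply intervalIntegral.integral_nonneg ht0
    intro s hs
    exact (hGpos s ⟨hs.1, le_trans hs.2 ht1⟩).le
  have hsplit : (∫ s in t0..t1, G s) = c + ∫ s in t..t1, G s := by
    rw [hc, intervalIntegral.integral_add_adjacent_intervals
      (hGint t0 t ⟨le_rfl, ht.le⟩ ⟨ht0, ht1⟩) (hGint t t1 ⟨ht0, ht1⟩ ⟨ht.le, le_rfl⟩)]
  have htail : 0 ≤ ∫ s in t..t1, G s := by
    apply intervalIntegral.integral_nonneg ht1
    intro s hs
    exact (hGpos s ⟨le_trans ht0 hs.1, hs.2⟩).le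
  have hbar : xbar + c ≤ xmax := by rw [hsplit] at hsmall; linarith
  rw [shift_int xmin xbar xmax c hc0 hxbar.1 hbar ψ0 hψ0c hψ0supp,
    shift_int xmin xbar xmax c hc0 hxbar.1 hbar φ0 hφ0c hφ0supp,
    expand_int xmin xmax c ψ0 hψ0c, expand_int xmin xmax c φ0 hφ0c,
    hmom 0 (by norm_num), hmom 1 (by norm_num), hmom 2 (by norm_num), hmom 3 (by norm_num)]
end

section
/- Let n be a positive natural number, F an n × n real matrix, and H a 1 × n real matrix (a row vector). Assume the pair (F, H) is observable, i.e., the n·n × n Kalman observability matrix formed by stacking H, HF, HF², …, HF^{n−1} has rank n (equivalently, the intersection of the kernels of H F^k for k = 0, …, n−1 is {0}). Let λ_1, …, λ_n be pairwise distinct real numbers, none of which is an eigenvalue of F. Then the linear map T : ℝⁿ → ℝⁿ defined by T(x) = (H (F − λ_1 I)^{-1} x, …, H (F − λ_n I)^{-1} x) is bijective. -/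
set_option autoImplicit false

/-! Write `x = P z` with `P = ∏ⱼ (F - λⱼ)`, which is invertible. Then
`(F - λᵢ)⁻¹ x = Lᵢ(F) z` with `Lᵢ = ∏_{j ≠ i} (X - λⱼ)`, so `H Lᵢ(F) z = 0` for all `i`. Up to
nonzero scalars the `Lᵢ` are the Lagrange basis at the nodes `λⱼ`, which spans the polynomials of
degree `< n`; hence `H Fᵏ z = 0` for `k < n`, and observability forces `z = 0`. An injective
endomorphism of `ℝⁿ` is bijective. -/

open Polynomial

namespace Lagrange

variable {ι : Type*} {s : Finset ι}

section Field

variable {K : Type*} [Field K] [DecidableEq ι] {v : ι → K}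

theorem map_eq_zero_of_map_nodal_erase_eq_zero {M : Type*} [AddCommGroup M] [Module K M]
    (hvs : Set.InjOn v s) (φ : K[X] →ₗ[K] M) (hφ : ∀ i ∈ s, φ (nodal (s.erase i) v) = 0)
    {p : K[X]} (hp : p.degree < s.card) : φ p = 0 := by
  rw [eq_interpolate hvs hp, interpolate_apply, map_sum]
  refine Finset.sum_eq_zero fun i hi => ?_
  rw [basis_eq_prod_sub_inv_mul_nodal_div hi, ← nodal_erase_eq_nodal_div hi, ← mul_assoc,
    ← C_mul, ← smul_eq_C_mul, map_smul, hφ i hi, smul_zero]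

end Field

section Algebra

variable {R A : Type*} [CommRing R] [Ring A] [Algebra R A] {v : ι → R}

theorem aeval_nodal_eq_mul_aeval_nodal_erase [DecidableEq ι] (a : A) {i : ι} (hi : i ∈ s) :
    aeval a (nodal s v) = (a - algebraMap R A (v i)) * aeval a (nodal (s.erase i) v) := by
  rw [nodal_eq_mul_nodal_erase hi, map_mul, map_sub, aeval_X, aeval_C]

theorem isUnit_aeval_nodal {a : A} (h : ∀ i ∈ s, IsUnit (a - algebraMap R A (v i))) :
    IsUnit (aeval a (nodal s v)) := by
  rw [nodal_eq]
  refine Finset.prod_induction _ (fun p => IsUnit (aeval a p)) (fun p q hp hq => ?_)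
    (by simp) fun i hi => ?_
  · rw [map_mul]; exact hp.mul hq
  · rw [map_sub, aeval_X, aeval_C]; exact h i hi

end Algebra

end Lagrange

namespace Matrix

variable {K ι m : Type*} [Field K] [Fintype ι] [DecidableEq ι]

def IsObservable (F : Matrix ι ι K) (H : Matrix m ι K) : Prop :=
  ∀ x : ι → K, (∀ k < Fintype.card ι, (H * F ^ k) *ᵥ x = 0) → x = 0

theorem IsObservable.eq_zero_of_mulVec_resolvent_eq_zero {F : Matrix ι ι K}
    {H : Matrix m ι K} (hobs : IsObservable F H) {κ : Type*} [Fintype κ] [DecidableEq κ]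
    {l : κ → K} (hl : Function.Injective l) (hcard : Fintype.card ι ≤ Fintype.card κ)
    (hres : ∀ i, IsUnit (F - algebraMap K _ (l i))) {x : ι → K}
    (hx : ∀ i, H *ᵥ ((F - algebraMap K _ (l i))⁻¹ *ᵥ x) = 0) : x = 0 := by
  obtain ⟨z, rfl⟩ := mulVec_surjective_iff_isUnit.mpr
    (Lagrange.isUnit_aeval_nodal (s := Finset.univ) fun i _ => hres i) x
  let φ : K[X] →ₗ[K] (m → K) :=
    { toFun := fun p => H *ᵥ (aeval F p *ᵥ z)
      map_add' := fun p q => by simp only [map_add, add_mulVec, mulVec_add]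
      map_smul' := fun c p => by simp [smul_mulVec, mulVec_smul] }
  have hφ : ∀ i ∈ Finset.univ, φ (Lagrange.nodal (Finset.univ.erase i) l) = 0 := by
    intro i hi
    have hinv : (F - algebraMap K _ (l i))⁻¹ * aeval F (Lagrange.nodal Finset.univ l) =
        aeval F (Lagrange.nodal (Finset.univ.erase i) l) := by
      rw [Lagrange.aeval_nodal_eq_mul_aeval_nodal_erase F hi,
        nonsing_inv_mul_cancel_left _ _ ((isUnit_iff_isUnit_det _).mp (hres i))]
    change H *ᵥ (_ *ᵥ z) = 0
    rw [← hinv, ← mulVec_mulVec]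
    exact hx i
  have hz : z = 0 := hobs z fun k hk => by
    rw [← mulVec_mulVec, ← aeval_X_pow (R := K)]
    refine Lagrange.map_eq_zero_of_map_nodal_erase_eq_zero hl.injOn φ hφ ?_
    rw [degree_X_pow, Finset.card_univ]
    exact_mod_cast hk.trans_le hcard
  rw [hz, mulVec_zero]

end Matrix

theorem stmt14_general (n : ℕ)
    (F : Matrix (Fin n) (Fin n) ℝ) (H : Matrix (Fin 1) (Fin n) ℝ)
    (hobs : ∀ x : Fin n → ℝ,
      (∀ k : ℕ, k < n → (H * F ^ k).mulVec x = 0) → x = 0)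
    (l : Fin n → ℝ) (hl : Function.Injective l)
    (hres : ∀ i : Fin n, (F - l i • (1 : Matrix (Fin n) (Fin n) ℝ)).det ≠ 0) :
    Function.Bijective (fun x : Fin n → ℝ =>
      fun i : Fin n =>
        H.mulVec ((F - l i • (1 : Matrix (Fin n) (Fin n) ℝ))⁻¹.mulVec x) 0) := by
  let T : (Fin n → ℝ) →ₗ[ℝ] (Fin n → ℝ) := LinearMap.pi fun i =>
    LinearMap.proj 0 ∘ₗ H.mulVecLin ∘ₗ (F - l i • (1 : Matrix (Fin n) (Fin n) ℝ))⁻¹.mulVecLin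
  have hobs' : F.IsObservable H := fun x hx => hobs x (by simpa using hx)
  have hT : Function.Injective T := by
    rw [← LinearMap.ker_eq_bot, LinearMap.ker_eq_bot']
    refine fun x hx => hobs'.eq_zero_of_mulVec_resolvent_eq_zero hl le_rfl
      (fun i => ?_) fun i => ?_
    · rw [Algebra.algebraMap_eq_smul_one, Matrix.isUnit_iff_isUnit_det]
      exact (hres i).isUnit
    · ext j
      rw [Subsingleton.elim j 0, Algebra.algebraMap_eq_smul_one]
      exact congrFun hx i
  exact ⟨hT, LinearMap.injective_iff_surjective.mp hT⟩

/-- Finite-dimensional Kazantzis–Kravaris/Luenberger invertibility: for an observable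
single-output pair `(F, H)` on `ℝⁿ` and `n` pairwise distinct reals `λᵢ` that are not
eigenvalues of `F`, the map `x ↦ (H (F − λᵢ I)⁻¹ x)ᵢ` is bijective. -/
theorem stmt14 (n : ℕ) (hn : 0 < n)
    (F : Matrix (Fin n) (Fin n) ℝ) (H : Matrix (Fin 1) (Fin n) ℝ)
    (hobs : ∀ x : Fin n → ℝ,
      (∀ k : ℕ, k < n → (H * F ^ k).mulVec x = 0) → x = 0)
    (l : Fin n → ℝ) (hl : Function.Injective l)
    (hres : ∀ i : Fin n, (F - l i • (1 : Matrix (Fin n) (Fin n) ℝ)).det ≠ 0) :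
    Function.Bijective (fun x : Fin n → ℝ =>
      fun i : Fin n =>
        H.mulVec ((F - l i • (1 : Matrix (Fin n) (Fin n) ℝ))⁻¹.mulVec x) 0) :=
  stmt14_general n F H hobs l hl hres
end
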